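/- arXiv:2208.12589 — 6 statements merged into one kernel-verified Lean document; each statement's English description precedes it below -/
import Mathlib

section
/- For every integer m ≥ 1 and n = 3m² − 3m + 1 (the number of points in a hexagonal grid with m points on each side), there exists a collection of at most 6m − 3 complete bipartite subgraphs of the complete graph K_n such that every edge of K_n is contained in exactly 2 or exactly 3 members of the collection. Consequently bp_{{2,3}}(K_n) ≤ 6m − 3 < 2√3·√n. -/
/-- A complete `r`-partite `r`-graph on vertex type `V`: `r` pairwise disjoint nonempty
finite parts; its edges are the `r`-sets containing exactly one vertex from each part. -/
structure CompleteMultipartite (r : ℕ) (V : Type*) where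
  parts : Fin r → Finset V
  parts_nonempty : ∀ i, (parts i).Nonempty
  parts_disjoint : ∀ i j, i ≠ j → Disjoint (parts i) (parts j)

namespace CompleteMultipartite

/-- The edge set of a complete `r`-partite `r`-graph: all `r`-sets obtained by choosing
one vertex from each part. -/
def edges {r : ℕ} {V : Type*} (B : CompleteMultipartite r V) : Set (Finset V) :=
  {e | ∃ f : Fin r → V, (∀ i, f i ∈ B.parts i) ∧ ∀ v, v ∈ e ↔ ∃ i, v = f i}

/-- The order (number of vertices) of a complete `r`-partite `r`-graph. -/
def order {r : ℕ} {V : Type*} (B : CompleteMultipartite r V) : ℕ :=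
  ∑ i, (B.parts i).card

end CompleteMultipartite

/-!
Place the vertices injectively in a hexagonal region of the triangular lattice, with the
three line directions given by the coordinates `a`, `b` and `a + b`. For every direction
and every threshold `c`, take the biclique between the vertices with coordinate `c` and
those with coordinate greater than `c`. An edge `{u, v}` lies in exactly one biclique of
each direction in which `u` and `v` differ, namely the one at the smaller coordinate, and
two distinct lattice points differ in at least two of the three directions.
-/

open Finset

namespace CompleteMultipartite

variable {V : Type*}

def ofDisjoint (s t : Finset V) (hs : s.Nonempty) (ht : t.Nonempty) (hst : Disjoint s t) :
    CompleteMultipartite 2 V where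
  parts := ![s, t]
  parts_nonempty := Fin.forall_fin_two.mpr ⟨hs, ht⟩
  parts_disjoint := by
    simp only [Fin.forall_fin_two]
    exact ⟨⟨absurd rfl, fun _ => hst⟩, ⟨fun _ => hst.symm, absurd rfl⟩⟩

theorem pair_mem_edges_ofDisjoint [DecidableEq V] {s t : Finset V} {hs : s.Nonempty}
    {ht : t.Nonempty} {hst : Disjoint s t} {u v : V} (huv : u ≠ v) :
    ({u, v} : Finset V) ∈ (ofDisjoint s t hs ht hst).edges ↔
      (u ∈ s ∧ v ∈ t) ∨ (v ∈ s ∧ u ∈ t) := by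
  simp only [edges, ofDisjoint, Fin.forall_fin_two, Fin.exists_fin_two, Set.mem_ofPred_eq,
    Matrix.cons_val_zero, Matrix.cons_val_one, Finset.mem_insert, Finset.mem_singleton]
  constructor
  · rintro ⟨f, ⟨hf0, hf1⟩, hf⟩
    rcases (hf u).mp (Or.inl rfl) with rfl | rfl <;>
      rcases (hf v).mp (Or.inr rfl) with rfl | rfl
    exacts [(huv rfl).elim, Or.inl ⟨hf0, hf1⟩, Or.inr ⟨hf0, hf1⟩, (huv rfl).elim]
  · rintro (⟨hu, hv⟩ | ⟨hv, hu⟩)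
    · exact ⟨![u, v], ⟨hu, hv⟩, fun w => by simp⟩
    · exact ⟨![v, u], ⟨hv, hu⟩, fun w => by simp [or_comm]⟩

end CompleteMultipartite

section Cuts

variable {V ι : Type*} [DecidableEq V] [Fintype ι]

theorem exists_bicliques_of_cuts (s t : ι → Finset V) (hst : ∀ i, Disjoint (s i) (t i)) :
    ∃ (k : ℕ) (B : Fin k → CompleteMultipartite 2 V), k ≤ Fintype.card ι ∧
      ∀ u v, u ≠ v → Nat.card {j : Fin k // ({u, v} : Finset V) ∈ (B j).edges} =
        #{i | (u ∈ s i ∧ v ∈ t i) ∨ (v ∈ s i ∧ u ∈ t i)} := by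
  classical
  set P : Finset ι := {i | (s i).Nonempty ∧ (t i).Nonempty}
  let B (j : Fin #P) : CompleteMultipartite 2 V :=
    .ofDisjoint (s (P.equivFin.symm j)) (t (P.equivFin.symm j))
      (mem_filter.mp (P.equivFin.symm j).2).2.1 (mem_filter.mp (P.equivFin.symm j).2).2.2
      (hst _)
  refine ⟨#P, B, card_le_univ P, fun u v huv => ?_⟩
  -- cuts with an empty side never separate two vertices, so dropping them loses nothing
  have hcut_mem : ∀ {i}, (u ∈ s i ∧ v ∈ t i) ∨ (v ∈ s i ∧ u ∈ t i) → i ∈ P := by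
    rintro i (⟨hu, hv⟩ | ⟨hv, hu⟩)
    exacts [mem_filter.mpr ⟨mem_univ _, ⟨u, hu⟩, ⟨v, hv⟩⟩,
      mem_filter.mpr ⟨mem_univ _, ⟨v, hv⟩, ⟨u, hu⟩⟩]
  calc Nat.card {j : Fin #P // ({u, v} : Finset V) ∈ (B j).edges}
      _ = Nat.card {i // (u ∈ s i ∧ v ∈ t i) ∨ (v ∈ s i ∧ u ∈ t i)} :=
        Nat.card_congr <| (P.equivFin.symm.subtypeEquiv fun j =>
          CompleteMultipartite.pair_mem_edges_ofDisjoint huv).trans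
        (Equiv.subtypeSubtypeEquivSubtype hcut_mem)
      _ = _ := by rw [Nat.card_eq_fintype_card, Fintype.card_subtype]

/-- Witnessed by the threshold cuts `({v | coord d v = c}, {v | c < coord d v})`, `c < N`. -/
theorem exists_bicliques_of_coords [Fintype V] (coord : ι → V → ℕ) (N : ℕ)
    (hN : ∀ d v, coord d v ≤ N) :
    ∃ (k : ℕ) (B : Fin k → CompleteMultipartite 2 V), k ≤ Fintype.card ι * N ∧
      ∀ u v, u ≠ v → Nat.card {j : Fin k // ({u, v} : Finset V) ∈ (B j).edges} =
        #{d | coord d u ≠ coord d v} := by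
  classical
  obtain ⟨k, B, hk, hB⟩ := exists_bicliques_of_cuts
    (fun x : ι × Fin N => {v | coord x.1 v = x.2}) (fun x => {v | x.2 < coord x.1 v})
    (fun x => disjoint_filter.mpr fun _ _ h => by omega)
  refine ⟨k, B, by simpa using hk, fun u v huv => ?_⟩
  rw [hB u v huv]
  refine card_bij (fun x _ => x.1) ?_ ?_ ?_
  · intro x hx
    simp only [mem_filter, mem_univ, true_and] at hx ⊢
    omega
  · rintro ⟨d, c⟩ hx ⟨d', c'⟩ hx' (rfl : d = d')
    simp only [mem_filter, mem_univ, true_and] at hx hx'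
    exact Prod.ext rfl (Fin.ext (show (c : ℕ) = c' by omega))
  · intro d hd
    simp only [mem_filter, mem_univ, true_and] at hd
    have := hN d u
    have := hN d v
    refine ⟨(d, ⟨min (coord d u) (coord d v), by omega⟩), ?_, rfl⟩
    simp only [mem_filter, mem_univ, true_and]
    omega

end Cuts

section Hexagon

/-- A hexagon of `3 m²` lattice points whose sides have `m` and `m + 1` points alternately;
on it `a + b - m` does not truncate. -/
def InHex (m : ℕ) (p : ℕ × ℕ) : Prop :=
  p.1 < 2 * m ∧ p.2 < 2 * m ∧ m ≤ p.1 + p.2 ∧ p.1 + p.2 < 3 * m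

def hexCoord (m : ℕ) (d : Fin 3) (p : ℕ × ℕ) : ℕ :=
  ![p.1, p.2, p.1 + p.2 - m] d

variable {m : ℕ} {p q : ℕ × ℕ}

theorem hexCoord_le (hp : InHex m p) (d : Fin 3) : hexCoord m d p ≤ 2 * m - 1 := by
  obtain ⟨h1, h2, h3, h4⟩ := hp
  fin_cases d <;>
    simp only [hexCoord, Fin.zero_eta, Fin.mk_one, Fin.reduceFinMk, Matrix.cons_val,
      Matrix.cons_val_zero, Matrix.cons_val_one] <;>
    omega

theorem eq_of_hexCoord_eq (hp : InHex m p) (hq : InHex m q) {d d' : Fin 3} (hdd : d ≠ d')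
    (h : hexCoord m d p = hexCoord m d q) (h' : hexCoord m d' p = hexCoord m d' q) :
    p = q := by
  obtain ⟨-, -, hp, -⟩ := hp
  obtain ⟨-, -, hq, -⟩ := hq
  fin_cases d <;> fin_cases d' <;>
    simp only [hexCoord, Fin.zero_eta, Fin.mk_one, Fin.reduceFinMk, Matrix.cons_val,
      Matrix.cons_val_zero, Matrix.cons_val_one, ne_eq, not_true_eq_false] at hdd h h' <;>
    ext <;> omega

theorem card_hexCoord_ne_eq_two_or_eq_three (hp : InHex m p) (hq : InHex m q) (hpq : p ≠ q) :
    #{d | hexCoord m d p ≠ hexCoord m d q} = 2 ∨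
      #{d | hexCoord m d p ≠ hexCoord m d q} = 3 := by
  have hagree : #{d | ¬hexCoord m d p ≠ hexCoord m d q} ≤ 1 := by
    refine card_le_one.mpr fun d hd d' hd' => ?_
    simp only [ne_eq, not_not, mem_filter, mem_univ, true_and] at hd hd'
    by_contra hdd
    exact hpq (eq_of_hexCoord_eq hp hq hdd hd hd')
  have hsum := card_filter_add_card_filter_not
    (s := (univ : Finset (Fin 3))) (fun d => hexCoord m d p ≠ hexCoord m d q)
  rw [card_univ, Fintype.card_fin] at hsum
  omega

/-- The hexagon is the union of three `m × m` rhombi. -/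
def hexPoint (m : ℕ) (x : Fin 3 × Fin m × Fin m) : ℕ × ℕ :=
  let i : ℕ := x.2.1
  let j : ℕ := x.2.2
  ![(i, m + j), (m + i, j), if i + j < m then (m + i, m + j) else (i, j)] x.1

theorem inHex_hexPoint (x : Fin 3 × Fin m × Fin m) : InHex m (hexPoint m x) := by
  obtain ⟨d, i, j⟩ := x
  have := i.isLt
  have := j.isLt
  fin_cases d <;>
    simp only [InHex, hexPoint, Fin.zero_eta, Fin.mk_one, Fin.reduceFinMk, Matrix.cons_val,
      Matrix.cons_val_zero, Matrix.cons_val_one, apply_ite] <;>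
    (try split_ifs) <;> omega

theorem hexPoint_injective : Function.Injective (hexPoint m) := by
  rintro ⟨d, i, j⟩ ⟨d', i', j'⟩ h
  have := i.isLt; have := j.isLt; have := i'.isLt; have := j'.isLt
  fin_cases d <;> fin_cases d' <;>
    simp only [hexPoint, Fin.zero_eta, Fin.mk_one, Fin.reduceFinMk, Matrix.cons_val,
      Matrix.cons_val_zero, Matrix.cons_val_one] at h <;>
    (try split_ifs at h) <;>
    simp_all [Prod.ext_iff, Fin.ext_iff] <;> omega

end Hexagon

theorem six_mul_sub_three_lt_two_sqrt_three_mul_sqrt {m : ℕ} (hm : 1 ≤ m) :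
    ((6 * m - 3 : ℕ) : ℝ) <
      2 * Real.sqrt 3 * Real.sqrt ((3 * m ^ 2 - 3 * m + 1 : ℕ) : ℝ) := by
  obtain ⟨k, rfl⟩ : ∃ k, m = k + 1 := ⟨m - 1, by omega⟩
  have hn : 3 * (k + 1) ^ 2 - 3 * (k + 1) + 1 = 3 * k ^ 2 + 3 * k + 1 := by
    rw [show 3 * (k + 1) ^ 2 = 3 * k ^ 2 + 3 * k + 3 * (k + 1) by ring]
    omega
  rw [hn, show 6 * (k + 1) - 3 = 6 * k + 3 by omega]
  have h12 : (2 : ℝ) * Real.sqrt 3 = Real.sqrt 12 := by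
    rw [show (12 : ℝ) = 2 ^ 2 * 3 by norm_num, Real.sqrt_mul (by positivity),
      Real.sqrt_sq (by norm_num)]
  rw [h12, ← Real.sqrt_mul (by norm_num), Real.lt_sqrt (by positivity)]
  push_cast
  nlinarith

/-- For every integer `m ≥ 1` and `n = 3m² − 3m + 1`, there is a
collection of at most `6m − 3` complete bipartite subgraphs of `K_n` such that every
edge of `K_n` lies in exactly 2 or exactly 3 members; consequently
`bp_{{2,3}}(K_n) ≤ 6m − 3 < 2√3·√n`. -/
theorem statement0 (m : ℕ) (hm : 1 ≤ m) :
    (∃ (t : ℕ) (B : Fin t → CompleteMultipartite 2 (Fin (3 * m ^ 2 - 3 * m + 1))),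
      t ≤ 6 * m - 3 ∧
      ∀ e : Finset (Fin (3 * m ^ 2 - 3 * m + 1)), e.card = 2 →
        Nat.card {j : Fin t // e ∈ (B j).edges} = 2 ∨
        Nat.card {j : Fin t // e ∈ (B j).edges} = 3) ∧
    ((6 * m - 3 : ℕ) : ℝ) <
      2 * Real.sqrt 3 * Real.sqrt ((3 * m ^ 2 - 3 * m + 1 : ℕ) : ℝ) := by
  have hcard : 3 * m ^ 2 - 3 * m + 1 ≤ Fintype.card (Fin 3 × Fin m × Fin m) := by
    have : 3 * m ≤ 3 * m ^ 2 := by nlinarith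
    simp only [Fintype.card_prod, Fintype.card_fin, ← sq]
    omega
  obtain ⟨emb⟩ := Function.Embedding.nonempty_of_card_le
    (α := Fin (3 * m ^ 2 - 3 * m + 1)) (β := Fin 3 × Fin m × Fin m) (by rwa [Fintype.card_fin])
  obtain ⟨k, B, hk, hB⟩ := exists_bicliques_of_coords
    (fun d v => hexCoord m d (hexPoint m (emb v))) (2 * m - 1)
    (fun d v => hexCoord_le (inHex_hexPoint _) d)
  refine ⟨⟨k, B, by simp only [Fintype.card_fin] at hk; omega, fun e he => ?_⟩,
    six_mul_sub_three_lt_two_sqrt_three_mul_sqrt hm⟩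
  obtain ⟨u, v, huv, rfl⟩ := card_eq_two.mp he
  rw [hB u v huv]
  exact card_hexCoord_ne_eq_two_or_eq_three (inHex_hexPoint _) (inHex_hexPoint _)
    (hexPoint_injective.ne (emb.injective.ne huv))
end

section
/- For every integer m ≥ 2 and n = m², there exists a collection of at most 6m − 10 complete 3-partite 3-graphs on the vertex set of the complete 3-uniform hypergraph K_n^3 such that every edge of K_n^3 is contained in at least 1 and at most 4 members of the collection. Consequently f_3(n,4) ≤ 6m − 10 ≤ 6√n. -/
namespace S1Aux

/-- The four linear functionals on the grid `[m] × [m]`: writing a vertex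
`v` of `Fin (m^2)` as `(x, y) = (v / m, v % m)`, they are `x`, `y`, `y - x`, `x + y`. -/
def phi (m : ℕ) : Fin 4 → Fin (m ^ 2) → ℤ :=
  ![fun v => ((v.val / m : ℕ) : ℤ),
    fun v => ((v.val % m : ℕ) : ℤ),
    fun v => ((v.val % m : ℕ) : ℤ) - ((v.val / m : ℕ) : ℤ),
    fun v => ((v.val / m : ℕ) : ℤ) + ((v.val % m : ℕ) : ℤ)]

def lo (m : ℕ) : Fin 4 → ℤ := ![1, 1, -((m : ℤ) - 2), 1]
def hi (m : ℕ) : Fin 4 → ℤ := ![(m : ℤ) - 2, (m : ℤ) - 2, (m : ℤ) - 2, 2 * (m : ℤ) - 3]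

lemma exists_xy {m : ℕ} (a b : ℕ) (ha : a < m) (hb : b < m) :
    ∃ v : Fin (m ^ 2), v.val / m = a ∧ v.val % m = b := by
  have hm : 0 < m := lt_of_le_of_lt (Nat.zero_le a) ha
  have h1 : m * (a + 1) ≤ m * m := Nat.mul_le_mul_left m (by omega)
  have h2 : m * (a + 1) = m * a + m := by ring
  have hp : m ^ 2 = m * m := pow_two m
  refine ⟨⟨b + m * a, by omega⟩, ?_, ?_⟩
  · simp [Nat.add_mul_div_left b a hm, Nat.div_eq_of_lt hb]
  · simp [Nat.add_mul_mod_self_left, Nat.mod_eq_of_lt hb]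

lemma phi_bounds {m : ℕ} (hm : 2 ≤ m) (k : Fin 4) (v : Fin (m ^ 2)) :
    lo m k - 1 ≤ phi m k v ∧ phi m k v ≤ hi m k + 1 := by
  have h0 : 0 < m := by omega
  have hp : m ^ 2 = m * m := pow_two m
  have hv : (v : ℕ) < m * m := by have := v.isLt; omega
  have hx : (v : ℕ) / m < m := (Nat.div_lt_iff_lt_mul h0).mpr hv
  have hy : (v : ℕ) % m < m := Nat.mod_lt _ h0
  have hx0 : (0:ℤ) ≤ ((v.val / m : ℕ) : ℤ) := Int.ofNat_nonneg _
  have hy0 : (0:ℤ) ≤ ((v.val % m : ℕ) : ℤ) := Int.ofNat_nonneg _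
  have hx1 : ((v.val / m : ℕ) : ℤ) < (m:ℤ) := by exact_mod_cast hx
  have hy1 : ((v.val % m : ℕ) : ℤ) < (m:ℤ) := by exact_mod_cast hy
  fin_cases k <;> simp [phi, lo, hi] <;> omega

lemma exists_phi_eq {m : ℕ} (hm : 2 ≤ m) (k : Fin 4) (c : ℤ)
    (h1 : lo m k - 1 ≤ c) (h2 : c ≤ hi m k + 1) : ∃ v, phi m k v = c := by
  fin_cases k <;> simp [lo, hi] at h1 h2
  · obtain ⟨v, hv1, hv2⟩ := exists_xy (m := m) c.toNat 0 (by omega) (by omega)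
    exact ⟨v, by simp [phi, hv1, -Int.natCast_ediv]; omega⟩
  · obtain ⟨v, hv1, hv2⟩ := exists_xy (m := m) 0 c.toNat (by omega) (by omega)
    exact ⟨v, by simp [phi, hv2, -Int.natCast_ediv]; omega⟩
  · by_cases hc : 0 ≤ c
    · obtain ⟨v, hv1, hv2⟩ := exists_xy (m := m) 0 c.toNat (by omega) (by omega)
      exact ⟨v, by simp [phi, hv1, hv2, -Int.natCast_ediv]; omega⟩
    · obtain ⟨v, hv1, hv2⟩ := exists_xy (m := m) (-c).toNat 0 (by omega) (by omega)
      exact ⟨v, by simp [phi, hv1, hv2, -Int.natCast_ediv]; omega⟩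
  · by_cases hc : c ≤ (m : ℤ) - 1
    · obtain ⟨v, hv1, hv2⟩ := exists_xy (m := m) 0 c.toNat (by omega) (by omega)
      exact ⟨v, by simp [phi, hv1, hv2, -Int.natCast_ediv]; omega⟩
    · obtain ⟨v, hv1, hv2⟩ :=
        exists_xy (m := m) (c - ((m:ℤ) - 1)).toNat (m - 1) (by omega) (by omega)
      exact ⟨v, by simp [phi, hv1, hv2, -Int.natCast_ediv]; omega⟩

/-- The tripartite graph with parts `g = c`, `g < c`, `g > c`. -/
def graph {V : Type*} [Fintype V] [DecidableEq V] (g : V → ℤ) (c : ℤ)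
    (he : ∃ v, g v = c) (hl : ∃ v, g v < c) (hg : ∃ v, c < g v) :
    CompleteMultipartite 3 V where
  parts := ![Finset.univ.filter (fun v => g v = c),
             Finset.univ.filter (fun v => g v < c),
             Finset.univ.filter (fun v => c < g v)]
  parts_nonempty := by
    intro i
    fin_cases i
    · obtain ⟨v, hv⟩ := he; exact ⟨v, by simp [hv]⟩
    · obtain ⟨v, hv⟩ := hl; exact ⟨v, by simp [hv]⟩
    · obtain ⟨v, hv⟩ := hg; exact ⟨v, by simp [hv]⟩
  parts_disjoint := by
    intro i j hij
    fin_cases i <;> fin_cases j <;>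
      first
      | exact absurd rfl hij
      | (rw [Finset.disjoint_left]; intro a ha hb; simp at ha hb; omega)

/-- `e` is covered by the level-`c` graph of `g` iff some three elements of `e`
have `g`-values `< c`, `= c`, `> c`. -/
lemma mem_edges_iff {V : Type*} [Fintype V] [DecidableEq V] (g : V → ℤ) (c : ℤ)
    (he : ∃ v, g v = c) (hl : ∃ v, g v < c) (hg : ∃ v, c < g v)
    (e : Finset V) (hcard : e.card = 3) :
    e ∈ (graph g c he hl hg).edges ↔
      ∃ a ∈ e, ∃ b ∈ e, ∃ d ∈ e, g a < c ∧ g b = c ∧ c < g d := by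
  constructor
  · rintro ⟨f, hf, hmem⟩
    have h0 := hf 0
    have h1 := hf 1
    have h2 := hf 2
    simp [graph] at h0 h1 h2
    exact ⟨f 1, (hmem (f 1)).mpr ⟨1, rfl⟩, f 0, (hmem (f 0)).mpr ⟨0, rfl⟩,
      f 2, (hmem (f 2)).mpr ⟨2, rfl⟩, h1, h0, h2⟩
  · rintro ⟨a, ha, b, hb, d, hd, h1, h2, h3⟩
    have hab : a ≠ b := fun h => by rw [h] at h1; omega
    have had : a ≠ d := fun h => by rw [h] at h1; omega
    have hbd : b ≠ d := fun h => by rw [h] at h2; omega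
    have hsub : ({a, b, d} : Finset V) ⊆ e := by
      intro x hx; simp at hx; rcases hx with rfl | rfl | rfl <;> assumption
    have hc3 : ({a, b, d} : Finset V).card = 3 := by
      rw [Finset.card_insert_of_notMem (by simp [hab, had]),
        Finset.card_insert_of_notMem (by simp [hbd]), Finset.card_singleton]
    have heq : ({a, b, d} : Finset V) = e :=
      Finset.eq_of_subset_of_card_le hsub (by omega)
    refine ⟨![b, a, d], ?_, ?_⟩
    · intro i; fin_cases i <;> simp [graph, h1, h2, h3]
    · intro v
      rw [← heq]
      simp only [Finset.mem_insert, Finset.mem_singleton]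
      constructor
      · rintro (rfl | rfl | rfl)
        exacts [⟨1, rfl⟩, ⟨0, rfl⟩, ⟨2, rfl⟩]
      · rintro ⟨i, rfl⟩
        fin_cases i <;> simp

/-- For a 3-element set, the covering level `c` is unique. -/
lemma cover_unique {V : Type*} (g : V → ℤ) (c c' : ℤ) (e : Finset V) (hcard : e.card = 3)
    (h : ∃ a ∈ e, ∃ b ∈ e, ∃ d ∈ e, g a < c ∧ g b = c ∧ c < g d)
    (h' : ∃ a ∈ e, ∃ b ∈ e, ∃ d ∈ e, g a < c' ∧ g b = c' ∧ c' < g d) :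
    c = c' := by
  classical
  by_contra hne
  wlog hlt : c < c' generalizing c c'
  · exact this c' c h' h (Ne.symm hne) (by omega)
  obtain ⟨a, ha, b, hb, -, -, h1, h2, -⟩ := h
  obtain ⟨-, -, b', hb', d', hd', -, h2', h3'⟩ := h'
  have key : ({a, b, b', d'} : Finset V).card ≤ e.card := by
    apply Finset.card_le_card
    intro x hx; simp at hx; rcases hx with rfl | rfl | rfl | rfl <;> assumption
  have c4 : ({a, b, b', d'} : Finset V).card = 4 := by
    have hab : a ≠ b := fun h => by rw [h] at h1; omega
    have hab' : a ≠ b' := fun h => by rw [h] at h1; omega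
    have had' : a ≠ d' := fun h => by rw [h] at h1; omega
    have hbb' : b ≠ b' := fun h => by rw [h] at h2; omega
    have hbd' : b ≠ d' := fun h => by rw [h] at h2; omega
    have hb'd' : b' ≠ d' := fun h => by rw [h] at h2'; omega
    rw [Finset.card_insert_of_notMem (by simp [hab, hab', had']),
      Finset.card_insert_of_notMem (by simp [hbb', hbd']),
      Finset.card_insert_of_notMem (by simp [hb'd']), Finset.card_singleton]
  omega

def param (m : ℕ) (j : ℕ) : Fin 4 × ℤ :=
  if j < m - 2 then (0, (j : ℤ) + 1)
  else if j < 2 * (m - 2) then (1, (j : ℤ) - ((m : ℤ) - 2) + 1)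
  else if j < 2 * (m - 2) + (2 * m - 3) then (2, (j : ℤ) - 3 * ((m : ℤ) - 2))
  else (3, (j : ℤ) - (4 * (m : ℤ) - 7) + 1)

lemma param_valid {m : ℕ} (hm : 2 ≤ m) (j : ℕ) (hj : j < 6 * m - 10) :
    lo m (param m j).1 ≤ (param m j).2 ∧ (param m j).2 ≤ hi m (param m j).1 := by
  unfold param
  split_ifs with h1 h2 h3 <;> simp [lo, hi] <;> omega

lemma param_inj {m : ℕ} (hm : 2 ≤ m) {j j' : ℕ} (hj : j < 6 * m - 10)
    (hj' : j' < 6 * m - 10) (h : param m j = param m j') : j = j' := by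
  unfold param at h
  split_ifs at h <;> simp [Prod.ext_iff, Fin.ext_iff] at h <;> omega

lemma param_surj {m : ℕ} (hm : 2 ≤ m) (k : Fin 4) (c : ℤ)
    (h1 : lo m k ≤ c) (h2 : c ≤ hi m k) :
    ∃ j, j < 6 * m - 10 ∧ param m j = (k, c) := by
  fin_cases k <;> simp [lo, hi] at h1 h2
  · refine ⟨(c - 1).toNat, by omega, ?_⟩
    unfold param; rw [if_pos (by omega)]
    simp [Prod.ext_iff]; omega
  · refine ⟨(m - 2) + (c - 1).toNat, by omega, ?_⟩
    unfold param; rw [if_neg (by omega), if_pos (by omega)]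
    simp [Prod.ext_iff]; omega
  · refine ⟨2 * (m - 2) + (c + ((m : ℤ) - 2)).toNat, by omega, ?_⟩
    unfold param; rw [if_neg (by omega), if_neg (by omega), if_pos (by omega)]
    simp [Prod.ext_iff]; omega
  · refine ⟨2 * (m - 2) + (2 * m - 3) + (c - 1).toNat, by omega, ?_⟩
    unfold param; rw [if_neg (by omega), if_neg (by omega), if_neg (by omega)]
    simp [Prod.ext_iff]; omega

lemma exists_sep {m : ℕ} (v1 v2 v3 : Fin (m ^ 2))
    (h12 : v1 ≠ v2) (h13 : v1 ≠ v3) (h23 : v2 ≠ v3) :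
    ∃ k : Fin 4, phi m k v1 ≠ phi m k v2 ∧ phi m k v1 ≠ phi m k v3 ∧
      phi m k v2 ≠ phi m k v3 := by
  have key : ∀ v w : Fin (m ^ 2), v ≠ w →
      ¬(v.val / m = w.val / m ∧ v.val % m = w.val % m) := by
    rintro v w hvw ⟨h1, h2⟩
    apply hvw; apply Fin.ext
    calc v.val = m * (v.val / m) + v.val % m := (Nat.div_add_mod _ m).symm
      _ = m * (w.val / m) + w.val % m := by rw [h1, h2]
      _ = w.val := Nat.div_add_mod _ m
  have k12 := key v1 v2 h12
  have k13 := key v1 v3 h13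
  have k23 := key v2 v3 h23
  have main :
      (((v1.val / m : ℕ) : ℤ) ≠ ((v2.val / m : ℕ) : ℤ) ∧
       ((v1.val / m : ℕ) : ℤ) ≠ ((v3.val / m : ℕ) : ℤ) ∧
       ((v2.val / m : ℕ) : ℤ) ≠ ((v3.val / m : ℕ) : ℤ)) ∨
      (((v1.val % m : ℕ) : ℤ) ≠ ((v2.val % m : ℕ) : ℤ) ∧
       ((v1.val % m : ℕ) : ℤ) ≠ ((v3.val % m : ℕ) : ℤ) ∧
       ((v2.val % m : ℕ) : ℤ) ≠ ((v3.val % m : ℕ) : ℤ)) ∨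
      ((((v1.val % m : ℕ) : ℤ) - ((v1.val / m : ℕ) : ℤ)) ≠
         (((v2.val % m : ℕ) : ℤ) - ((v2.val / m : ℕ) : ℤ)) ∧
       (((v1.val % m : ℕ) : ℤ) - ((v1.val / m : ℕ) : ℤ)) ≠
         (((v3.val % m : ℕ) : ℤ) - ((v3.val / m : ℕ) : ℤ)) ∧
       (((v2.val % m : ℕ) : ℤ) - ((v2.val / m : ℕ) : ℤ)) ≠
         (((v3.val % m : ℕ) : ℤ) - ((v3.val / m : ℕ) : ℤ))) ∨
      ((((v1.val / m : ℕ) : ℤ) + ((v1.val % m : ℕ) : ℤ)) ≠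
         (((v2.val / m : ℕ) : ℤ) + ((v2.val % m : ℕ) : ℤ)) ∧
       (((v1.val / m : ℕ) : ℤ) + ((v1.val % m : ℕ) : ℤ)) ≠
         (((v3.val / m : ℕ) : ℤ) + ((v3.val % m : ℕ) : ℤ)) ∧
       (((v2.val / m : ℕ) : ℤ) + ((v2.val % m : ℕ) : ℤ)) ≠
         (((v3.val / m : ℕ) : ℤ) + ((v3.val % m : ℕ) : ℤ))) := by
    omega
  rcases main with h | h | h | h
  · exact ⟨0, h⟩
  · exact ⟨1, h⟩
  · exact ⟨2, h⟩
  · exact ⟨3, h⟩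

lemma exists_mid {α : Type*} (f : α → ℤ) {e : Finset α} {v1 v2 v3 : α}
    (h1 : v1 ∈ e) (h2 : v2 ∈ e) (h3 : v3 ∈ e)
    (d12 : f v1 ≠ f v2) (d13 : f v1 ≠ f v3) (d23 : f v2 ≠ f v3) :
    ∃ a ∈ e, ∃ b ∈ e, ∃ d ∈ e, f a < f b ∧ f b < f d := by
  rcases d12.lt_or_gt with h | h <;> rcases d13.lt_or_gt with h' | h' <;>
    rcases d23.lt_or_gt with h'' | h''
  all_goals first
  | exact ⟨v1, h1, v2, h2, v3, h3, by omega, by omega⟩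
  | exact ⟨v1, h1, v3, h3, v2, h2, by omega, by omega⟩
  | exact ⟨v2, h2, v1, h1, v3, h3, by omega, by omega⟩
  | exact ⟨v2, h2, v3, h3, v1, h1, by omega, by omega⟩
  | exact ⟨v3, h3, v1, h1, v2, h2, by omega, by omega⟩
  | exact ⟨v3, h3, v2, h2, v1, h1, by omega, by omega⟩

lemma graph_exists {m : ℕ} (hm : 2 ≤ m) (k : Fin 4) (c : ℤ)
    (h1 : lo m k ≤ c) (h2 : c ≤ hi m k) :
    (∃ v, phi m k v = c) ∧ (∃ v, phi m k v < c) ∧ (∃ v, c < phi m k v) := by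
  have hlohi : lo m k ≤ hi m k + 2 := by fin_cases k <;> simp [lo, hi] <;> omega
  refine ⟨exists_phi_eq hm k c (by omega) (by omega), ?_, ?_⟩
  · obtain ⟨v, hv⟩ := exists_phi_eq hm k (lo m k - 1) (by omega) (by omega)
    exact ⟨v, by omega⟩
  · obtain ⟨v, hv⟩ := exists_phi_eq hm k (hi m k + 1) (by omega) (by omega)
    exact ⟨v, by omega⟩

def Bfam (m : ℕ) (hm : 2 ≤ m) : Fin (6 * m - 10) → CompleteMultipartite 3 (Fin (m ^ 2)) :=
  fun j =>
    graph (phi m (param m j.1).1) (param m j.1).2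
      (graph_exists hm _ _ (param_valid hm j.1 j.2).1 (param_valid hm j.1 j.2).2).1
      (graph_exists hm _ _ (param_valid hm j.1 j.2).1 (param_valid hm j.1 j.2).2).2.1
      (graph_exists hm _ _ (param_valid hm j.1 j.2).1 (param_valid hm j.1 j.2).2).2.2

lemma Bfam_mem_iff {m : ℕ} (hm : 2 ≤ m) (j : Fin (6 * m - 10))
    (e : Finset (Fin (m ^ 2))) (hcard : e.card = 3) :
    e ∈ (Bfam m hm j).edges ↔
      ∃ a ∈ e, ∃ b ∈ e, ∃ d ∈ e, phi m (param m j.1).1 a < (param m j.1).2 ∧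
        phi m (param m j.1).1 b = (param m j.1).2 ∧ (param m j.1).2 < phi m (param m j.1).1 d :=
  mem_edges_iff _ _ _ _ _ _ hcard

end S1Aux

open S1Aux in
/-- For every integer `m ≥ 2` and `n = m²`, there is a collection of at
most `6m − 10` complete 3-partite 3-graphs on the vertices of `K_n^3` such that every
edge of `K_n^3` lies in at least 1 and at most 4 members; consequently
`f_3(n,4) ≤ 6m − 10 ≤ 6√n`. -/
theorem statement1 (m : ℕ) (hm : 2 ≤ m) :
    (∃ (t : ℕ) (B : Fin t → CompleteMultipartite 3 (Fin (m ^ 2))),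
      t ≤ 6 * m - 10 ∧
      ∀ e : Finset (Fin (m ^ 2)), e.card = 3 →
        1 ≤ Nat.card {j : Fin t // e ∈ (B j).edges} ∧
        Nat.card {j : Fin t // e ∈ (B j).edges} ≤ 4) ∧
    ((6 * m - 10 : ℕ) : ℝ) ≤ 6 * Real.sqrt ((m ^ 2 : ℕ) : ℝ) := by
  constructor
  · -- the construction
    refine ⟨6 * m - 10, Bfam m hm, le_refl _, ?_⟩
    intro e hcard
    constructor
    · -- at least one cover
      obtain ⟨v1, v2, v3, h12, h13, h23, he⟩ := Finset.card_eq_three.mp hcard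
      have m1 : v1 ∈ e := by rw [he]; simp
      have m2 : v2 ∈ e := by rw [he]; simp
      have m3 : v3 ∈ e := by rw [he]; simp
      obtain ⟨k, d12, d13, d23⟩ := exists_sep v1 v2 v3 h12 h13 h23
      obtain ⟨a, ha, b, hb, d, hd, o1, o2⟩ :=
        exists_mid (phi m k) m1 m2 m3 d12 d13 d23
      have hba := (phi_bounds hm k a).1
      have hbd := (phi_bounds hm k d).2
      obtain ⟨j, hj, hpj⟩ := param_surj hm k (phi m k b) (by omega) (by omega)
      have cov : e ∈ (Bfam m hm ⟨j, hj⟩).edges := by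
        rw [Bfam_mem_iff hm _ e hcard]
        have e1 : (param m j).1 = k := by rw [hpj]
        have e2 : (param m j).2 = phi m k b := by rw [hpj]
        rw [e1, e2]
        exact ⟨a, ha, b, hb, d, hd, o1, rfl, o2⟩
      have hne : Nonempty {j : Fin (6 * m - 10) // e ∈ (Bfam m hm j).edges} :=
        ⟨⟨⟨j, hj⟩, cov⟩⟩
      exact Nat.card_pos
    · -- at most four covers
      have hinj : Function.Injective
          (fun p : {j : Fin (6 * m - 10) // e ∈ (Bfam m hm j).edges} =>
            (param m p.1.1).1) := by
        rintro ⟨⟨j, hj⟩, hcov⟩ ⟨⟨j', hj'⟩, hcov'⟩ hk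
        simp only at hk
        rw [Bfam_mem_iff hm _ e hcard] at hcov hcov'
        have hc : (param m j).2 = (param m j').2 := by
          apply cover_unique (phi m (param m j).1) _ _ e hcard hcov
          rw [hk]; exact hcov'
        have hpp : param m j = param m j' := Prod.ext hk hc
        have := param_inj hm hj hj' hpp
        simp [this]
      have h4 : Nat.card {j : Fin (6 * m - 10) // e ∈ (Bfam m hm j).edges} ≤
          Nat.card (Fin 4) := Nat.card_le_card_of_injective _ hinj
      simpa using h4
  · -- the numeric bound
    have h1 : ((m ^ 2 : ℕ) : ℝ) = ((m : ℝ)) ^ 2 := by push_cast; ring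
    rw [h1, Real.sqrt_sq (by positivity)]
    calc ((6 * m - 10 : ℕ) : ℝ) ≤ ((6 * m : ℕ) : ℝ) := Nat.cast_le.mpr (by omega)
      _ = 6 * (m : ℝ) := by push_cast; ring
end

section
/- Let H be an r-uniform hypergraph on n vertices (r ≥ 2) and let R_1, …, R_t be complete r-partite r-graphs on subsets of the vertices of H whose edge sets together cover all edges of H. For each vertex i, let a_i be the number of indices j such that vertex i belongs to R_j. Then H has an independent set of size at least Σ_{i=1}^n (1 − 1/r)^{a_i}; in particular Σ_{i=1}^n (1 − 1/r)^{a_i} ≤ α(H), where α(H) is the independence number of H. -/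
/-- If the complete `r`-partite `r`-graphs `R 0, …, R (t-1)` cover all
edges of an `r`-uniform hypergraph `H` on `n` vertices, and `a i` is the number of
members containing vertex `i`, then `H` has an independent set of size at least
`∑ i, (1 − 1/r)^(a i)`; in particular this sum is at most the independence number. -/
theorem statement2 {V : Type*} [Fintype V] (r n : ℕ) (hr : 2 ≤ r)
    (hn : Fintype.card V = n)
    (E : Finset (Finset V)) (hE : ∀ e ∈ E, e.card = r)
    (t : ℕ) (R : Fin t → CompleteMultipartite r V)
    (hcover : ∀ e ∈ E, ∃ j, e ∈ (R j).edges)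
    (a : V → ℕ)
    (ha : ∀ i, a i = Nat.card {j : Fin t // ∃ k, i ∈ (R j).parts k}) :
    (∃ S : Finset V, (∀ e ∈ E, ¬ e ⊆ S) ∧
      ∑ i : V, ((1 : ℝ) - 1 / r) ^ (a i) ≤ (S.card : ℝ)) ∧
    ∀ α : ℕ,
      IsGreatest {k | ∃ S : Finset V, (∀ e ∈ E, ¬ e ⊆ S) ∧ S.card = k} α →
      ∑ i : V, ((1 : ℝ) - 1 / r) ^ (a i) ≤ (α : ℝ) := by
  classical
  have hr1 : 1 ≤ r := le_trans (by norm_num) hr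
  have hrR : (0:ℝ) < (r:ℝ) := by
    have : 0 < r := lt_of_lt_of_le (by norm_num) hr
    exact_mod_cast this
  -- the "bad" indices for a vertex
  set bad : V → Finset (Fin t) :=
    fun i => Finset.univ.filter (fun j => ∃ k, i ∈ (R j).parts k) with hbad
  have ha' : ∀ i, a i = (bad i).card := by
    intro i
    rw [ha, Nat.card_eq_fintype_card, Fintype.card_subtype]
  have hat : ∀ i, a i ≤ t := by
    intro i
    rw [ha' i]
    exact le_trans (Finset.card_filter_le _ _) (by simp)
  -- survivor sets
  set S : (Fin t → Fin r) → Finset V :=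
    fun g => Finset.univ.filter (fun i => ∀ j k, i ∈ (R j).parts k → g j ≠ k) with hS
  have hind : ∀ g, ∀ e ∈ E, ¬ e ⊆ S g := by
    intro g e he hsub
    obtain ⟨j, f, hf, hmem⟩ := hcover e he
    have hv : f (g j) ∈ e := (hmem (f (g j))).mpr ⟨g j, rfl⟩
    have := hsub hv
    simp only [hS, Finset.mem_filter] at this
    exact this.2 j (g j) (hf (g j)) rfl
  -- counting survivors of a fixed vertex
  have hcount : ∀ i : V,
      (Finset.univ.filter (fun g : Fin t → Fin r =>
        ∀ j k, i ∈ (R j).parts k → g j ≠ k)).card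
        = (r-1)^(a i) * r^(t - a i) := by
    intro i
    set A : Fin t → Finset (Fin r) :=
      fun j => Finset.univ.filter (fun k => i ∉ (R j).parts k) with hA
    have hfilter : (Finset.univ.filter (fun g : Fin t → Fin r =>
        ∀ j k, i ∈ (R j).parts k → g j ≠ k)) = Fintype.piFinset A := by
      ext g
      simp only [Finset.mem_filter, Finset.mem_univ, true_and, Fintype.mem_piFinset,
        hA]
      constructor
      · intro h j
        intro hmem
        exact h j (g j) hmem rfl
      · intro h j k hmem hgk
        exact h j (hgk ▸ hmem)
    have hAcard : ∀ j : Fin t, (A j).card = if j ∈ bad i then r - 1 else r := by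
      intro j
      by_cases hj : j ∈ bad i
      · simp only [hj, if_true]
        simp only [hbad, Finset.mem_filter, Finset.mem_univ, true_and] at hj
        obtain ⟨k0, hk0⟩ := hj
        have : A j = ({k0} : Finset (Fin r))ᶜ := by
          ext k
          simp only [hA, Finset.mem_filter, Finset.mem_univ, true_and,
            Finset.mem_compl, Finset.mem_singleton]
          constructor
          · intro hk hkk; exact hk (hkk ▸ hk0)
          · intro hkk hk
            exact (Finset.disjoint_left.mp ((R j).parts_disjoint k k0 hkk) hk) hk0
        rw [this, Finset.card_compl]
        simp
      · simp only [hj, if_false]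
        have : A j = Finset.univ := by
          ext k
          simp only [hA, Finset.mem_filter, Finset.mem_univ, true_and, iff_true]
          intro hk
          exact hj (by simp [hbad]; exact ⟨k, hk⟩)
        rw [this]; simp
    rw [hfilter, Fintype.card_piFinset]
    rw [← Finset.prod_mul_prod_compl (bad i)]
    have h1 : ∏ j ∈ bad i, (A j).card = (r-1)^(a i) := by
      rw [Finset.prod_congr rfl (fun j hj => by rw [hAcard j, if_pos hj])]
      rw [Finset.prod_const, ha' i]
    have h2 : ∏ j ∈ (bad i)ᶜ, (A j).card = r^(t - a i) := by
      rw [Finset.prod_congr rfl (fun j hj => by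
        rw [hAcard j, if_neg (Finset.mem_compl.mp hj)])]
      rw [Finset.prod_const, Finset.card_compl, ha' i]
      simp
    rw [h1, h2]
  -- total nat count
  have hsum : ∑ g : Fin t → Fin r, (S g).card
      = ∑ i : V, (r-1)^(a i) * r^(t - a i) := by
    have : ∀ g, (S g).card = ∑ i : V,
        (if (∀ j k, i ∈ (R j).parts k → g j ≠ k) then 1 else 0) := by
      intro g
      rw [hS]
      rw [Finset.card_filter]
    rw [Finset.sum_congr rfl (fun g _ => this g), Finset.sum_comm]
    refine Finset.sum_congr rfl (fun i _ => ?_)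
    rw [← Finset.card_filter]
    exact hcount i
  -- real averaging
  set T : ℝ := ∑ i : V, ((1 : ℝ) - 1 / r) ^ (a i) with hT
  have hkey : ∑ _g : Fin t → Fin r, T = ∑ g : Fin t → Fin r, ((S g).card : ℝ) := by
    have hcardfun : Fintype.card (Fin t → Fin r) = r ^ t := by simp
    rw [Finset.sum_const, Finset.card_univ, hcardfun]
    have : ∑ g : Fin t → Fin r, ((S g).card : ℝ)
        = ((∑ g : Fin t → Fin r, (S g).card : ℕ) : ℝ) := by push_cast; ring
    rw [this, hsum, nsmul_eq_mul]
    push_cast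
    rw [hT, Finset.mul_sum]
    refine Finset.sum_congr rfl (fun i _ => ?_)
    have hq : (1 : ℝ) - 1 / r = ((r:ℝ) - 1) / r := by
      field_simp
    have hsplit : (r:ℝ)^t = (r:ℝ)^(a i) * (r:ℝ)^(t - a i) := by
      rw [← pow_add]
      congr 1
      have := hat i
      omega
    rw [hq, hsplit, div_pow]
    have hcast : ((r - 1 : ℕ) : ℝ) = (r:ℝ) - 1 := by
      push_cast [hr1]; ring
    rw [hcast]
    field_simp
  haveI : Nonempty (Fin r) := ⟨⟨0, by omega⟩⟩
  obtain ⟨g, _, hg⟩ := Finset.exists_le_of_sum_le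
    (Finset.univ_nonempty (α := Fin t → Fin r)) hkey.le
  refine ⟨⟨S g, hind g, hg⟩, ?_⟩
  intro α hα
  have hmem : (S g).card ∈ {k | ∃ S' : Finset V, (∀ e ∈ E, ¬ e ⊆ S') ∧ S'.card = k} :=
    ⟨S g, hind g, rfl⟩
  have := hα.2 hmem
  exact le_trans hg (by exact_mod_cast this)
end

section
/- Fix r ≥ 2, a symbol set S = {0, 1, …, r−1, *}, and pairwise disjoint nonempty finite sets α₁, …, α_r. Let A be the complete r-partite r-graph whose i-th part is S × α_i, and let C be the r-uniform hypergraph on the same vertex set whose edges are exactly those edges {(x₁,v₁), …, (x_r,v_r)} of A (with (x_i, v_i) in the i-th part) for which it is NOT the case that {x₁, …, x_r} = {0, 1, …, r−1}. Then the edge set of C can be partitioned into ⌊(e−1)·r!⌋ complete r-partite r-graphs. -/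
namespace Statement8Aux

open Finset

/-- Index type: injective words over `Fin r` of length `j < r`. -/
abbrev Idx (r : ℕ) := Σ j : Fin r, Fin (j : ℕ) ↪ Fin r

/-- The symbol box attached to an injective word `w = (a₀,…,a_{j−1})`:
positions `i < j` carry the singleton `{aᵢ}`, position `j` carries
`{*, a₀, …, a_{j−1}}`, and later positions are unrestricted. -/
def symParts {r : ℕ} (w : Idx r) (i : Fin r) : Finset (Option (Fin r)) :=
  if h : (i : ℕ) < (w.1 : ℕ) then {some (w.2 ⟨i, h⟩)}
  else if (i : ℕ) = (w.1 : ℕ) then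
    insert none (Finset.image (fun q => some (w.2 q)) Finset.univ)
  else Finset.univ

lemma symParts_lt {r : ℕ} (w : Idx r) (i : Fin r) (h : (i : ℕ) < (w.1 : ℕ)) :
    symParts w i = {some (w.2 ⟨i, h⟩)} := dif_pos h

lemma symParts_eq {r : ℕ} (w : Idx r) (i : Fin r) (h : (i : ℕ) = (w.1 : ℕ)) :
    symParts w i = insert none (Finset.image (fun q => some (w.2 q)) Finset.univ) := by
  unfold symParts
  rw [dif_neg (by omega), if_pos h]

lemma symParts_gt {r : ℕ} (w : Idx r) (i : Fin r) (h : (w.1 : ℕ) < (i : ℕ)) :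
    symParts w i = Finset.univ := by
  unfold symParts
  rw [dif_neg (by omega), if_neg (by omega)]

lemma symParts_nonempty {r : ℕ} (w : Idx r) (i : Fin r) : (symParts w i).Nonempty := by
  unfold symParts
  split_ifs
  · exact Finset.singleton_nonempty _
  · exact Finset.insert_nonempty _ _
  · exact ⟨none, Finset.mem_univ _⟩

/-- Membership in a symbol box determines the box. -/
lemma symParts_unique {r : ℕ} (x : Fin r → Option (Fin r)) (w w' : Idx r)
    (hw : ∀ i, x i ∈ symParts w i) (hw' : ∀ i, x i ∈ symParts w' i) : w = w' := by
  have main : ∀ (w w' : Idx r),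
      (∀ i, x i ∈ symParts w i) → (∀ i, x i ∈ symParts w' i) →
      ¬ ((w.1 : ℕ) < (w'.1 : ℕ)) := by
    clear hw hw' w w'
    intro w w' hw hw' hlt
    have hxj := hw w.1
    rw [symParts_eq w w.1 rfl, Finset.mem_insert] at hxj
    have hxj' := hw' w.1
    rw [symParts_lt w' w.1 hlt, Finset.mem_singleton] at hxj'
    rcases hxj with h0 | h0
    · rw [h0] at hxj'; exact Option.some_ne_none _ hxj'.symm
    · rw [Finset.mem_image] at h0
      obtain ⟨q, -, hq⟩ := h0
      have hq2 : (q : ℕ) < (w.1 : ℕ) := q.2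
      have hqr : (q : ℕ) < r := lt_trans hq2 w.1.2
      have h1 := hw ⟨q, hqr⟩
      rw [symParts_lt w ⟨q, hqr⟩ hq2, Finset.mem_singleton] at h1
      have h2 := hw' ⟨q, hqr⟩
      rw [symParts_lt w' ⟨q, hqr⟩ (lt_trans hq2 hlt), Finset.mem_singleton] at h2
      have h1' : x ⟨q, hqr⟩ = some (w.2 q) := h1
      have e1 : w'.2 ⟨(q : ℕ), lt_trans hq2 hlt⟩ = w'.2 ⟨(w.1 : ℕ), hlt⟩ := by
        apply Option.some_injective
        rw [← h2, h1', hq, hxj']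
      have e2 := w'.2.injective e1
      have : (q : ℕ) = (w.1 : ℕ) := congrArg Fin.val e2
      omega
  have hj : (w.1 : ℕ) = (w'.1 : ℕ) := by
    rcases lt_trichotomy (w.1 : ℕ) (w'.1 : ℕ) with h | h | h
    · exact absurd h (main w w' hw hw')
    · exact h
    · exact absurd h (main w' w hw' hw)
  obtain ⟨j, a⟩ := w
  obtain ⟨j', a'⟩ := w'
  simp only at hj
  have hjj : j = j' := Fin.ext hj
  subst hjj
  congr 1
  apply Function.Embedding.ext
  intro q
  have hqr : (q : ℕ) < r := lt_trans q.2 j.2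
  have h1 := hw ⟨q, hqr⟩
  rw [symParts_lt ⟨j, a⟩ ⟨q, hqr⟩ q.2, Finset.mem_singleton] at h1
  have h2 := hw' ⟨q, hqr⟩
  rw [symParts_lt ⟨j, a'⟩ ⟨q, hqr⟩ q.2, Finset.mem_singleton] at h2
  have : some (a q) = some (a' q) := by rw [← h1, ← h2]
  exact Option.some_injective _ this

/-- The key combinatorial lemma: a word `x ∈ S^r` does not use every symbol of
`Fin r` iff it lies in exactly one symbol box. -/
lemma key {r : ℕ} (x : Fin r → Option (Fin r)) :
    (¬ ∀ c : Fin r, ∃ i, x i = some c) ↔ ∃! w : Idx r, ∀ i, x i ∈ symParts w i := by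
  constructor
  · intro hx
    have hQex : ∃ n, ∃ h : n < r,
        (x ⟨n, h⟩ = none ∨ ∃ m : Fin r, (m : ℕ) < n ∧ x m = x ⟨n, h⟩) := by
      by_contra hno
      push_neg at hno
      have hnn : ∀ i : Fin r, x i ≠ none := by
        intro i
        have := (hno i.1 i.2).1
        rwa [Fin.eta] at this
      have hinj : Function.Injective x := by
        intro i j hij
        rcases lt_trichotomy (i : ℕ) (j : ℕ) with h | h | h
        · have := (hno j.1 j.2).2 i (by simpa using h)
          rw [Fin.eta] at this
          exact absurd hij this
        · exact Fin.ext h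
        · have := (hno i.1 i.2).2 j (by simpa using h)
          rw [Fin.eta] at this
          exact absurd hij.symm this
      have hsome : ∀ i, (x i).isSome := fun i => Option.isSome_iff_ne_none.2 (hnn i)
      have hginj : Function.Injective (fun i => (x i).get (hsome i)) := by
        intro i j hij
        apply hinj
        rw [← Option.some_get (hsome i), ← Option.some_get (hsome j)]
        exact congrArg some hij
      have hgsurj := Finite.injective_iff_surjective.1 hginj
      apply hx
      intro c
      obtain ⟨i, hi⟩ := hgsurj c
      exact ⟨i, by rw [← Option.some_get (hsome i)]; exact congrArg some hi⟩
    classical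
    set p := Nat.find hQex with hp
    obtain ⟨hpr, hpbad⟩ := Nat.find_spec hQex
    have hgood : ∀ n (hn : n < p), x ⟨n, lt_trans hn hpr⟩ ≠ none ∧
        ∀ m : Fin r, (m : ℕ) < n → x m ≠ x ⟨n, lt_trans hn hpr⟩ := by
      intro n hn
      have hm := Nat.find_min hQex hn
      push_neg at hm
      exact hm (lt_trans hn hpr)
    have hsome : ∀ q : Fin p, (x ⟨(q : ℕ), lt_trans q.2 hpr⟩).isSome := by
      intro q
      exact Option.isSome_iff_ne_none.2 (hgood q q.2).1
    set a : Fin p → Fin r := fun q => (x ⟨(q : ℕ), lt_trans q.2 hpr⟩).get (hsome q) with ha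
    have hxa : ∀ q : Fin p, x ⟨(q : ℕ), lt_trans q.2 hpr⟩ = some (a q) := by
      intro q
      rw [ha]
      exact (Option.some_get (hsome q)).symm
    have hainj : Function.Injective a := by
      intro q q' hqq
      have hx2 : x ⟨(q : ℕ), lt_trans q.2 hpr⟩ = x ⟨(q' : ℕ), lt_trans q'.2 hpr⟩ := by
        rw [hxa q, hxa q', hqq]
      rcases lt_trichotomy (q : ℕ) (q' : ℕ) with h | h | h
      · exact absurd hx2 ((hgood q' q'.2).2 ⟨(q : ℕ), lt_trans q.2 hpr⟩ h)
      · exact Fin.ext h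
      · exact absurd hx2.symm ((hgood q q.2).2 ⟨(q' : ℕ), lt_trans q'.2 hpr⟩ h)
    have hmem : ∀ i, x i ∈ symParts (⟨⟨p, hpr⟩, ⟨a, hainj⟩⟩ : Idx r) i := by
      intro i
      rcases lt_trichotomy (i : ℕ) p with h | h | h
      · rw [symParts_lt _ i h, Finset.mem_singleton]
        have := hxa ⟨(i : ℕ), h⟩
        simpa using this
      · rw [symParts_eq _ i h, Finset.mem_insert]
        have hip : i = ⟨p, hpr⟩ := Fin.ext h
        rcases hpbad with h0 | ⟨m, hm1, hm2⟩
        · left; rw [hip]; exact h0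
        · right
          rw [Finset.mem_image]
          refine ⟨⟨(m : ℕ), hm1⟩, Finset.mem_univ _, ?_⟩
          show some (a ⟨(m : ℕ), hm1⟩) = x i
          have hxm : x m = some (a ⟨(m : ℕ), hm1⟩) := hxa ⟨(m : ℕ), hm1⟩
          rw [hip]
          exact hxm.symm.trans hm2
      · rw [symParts_gt _ i h]
        exact Finset.mem_univ _
    exact ⟨⟨⟨p, hpr⟩, ⟨a, hainj⟩⟩, hmem,
      fun w' hw' => symParts_unique x w' ⟨⟨p, hpr⟩, ⟨a, hainj⟩⟩ hw' hmem⟩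
  · rintro ⟨w, hw, -⟩ hsur
    have hsub : Finset.univ.image (fun c : Fin r => some c) ⊆ Finset.univ.image x := by
      intro y hy
      rw [Finset.mem_image] at hy ⊢
      obtain ⟨c, -, hc⟩ := hy
      obtain ⟨i, hi⟩ := hsur c
      exact ⟨i, Finset.mem_univ _, by rw [hi, hc]⟩
    have hcard1 : (Finset.univ.image (fun c : Fin r => some c)).card = r := by
      rw [Finset.card_image_of_injective _ (Option.some_injective _), Finset.card_univ,
        Fintype.card_fin]
    have hcard2 : (Finset.univ.image x).card = r := by
      have h1 : r ≤ (Finset.univ.image x).card := by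
        have := Finset.card_le_card hsub
        rwa [hcard1] at this
      have h2 : (Finset.univ.image x).card ≤ r := by
        calc (Finset.univ.image x).card ≤ (Finset.univ : Finset (Fin r)).card :=
              Finset.card_image_le
          _ = r := by rw [Finset.card_univ, Fintype.card_fin]
      omega
    have hinj : Function.Injective x := by
      have := Finset.card_image_iff.1 (by rw [hcard2, Finset.card_univ, Fintype.card_fin])
      intro i j hij
      exact this (Finset.mem_coe.2 (Finset.mem_univ i)) (Finset.mem_coe.2 (Finset.mem_univ j)) hij
    have heq : Finset.univ.image (fun c : Fin r => some c) = Finset.univ.image x :=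
      Finset.eq_of_subset_of_card_le hsub (by rw [hcard1, hcard2])
    have hxw := hw w.1
    rw [symParts_eq w w.1 rfl, Finset.mem_insert] at hxw
    rcases hxw with h0 | h0
    · have hmem : none ∈ Finset.univ.image x :=
        Finset.mem_image.2 ⟨w.1, Finset.mem_univ _, h0⟩
      rw [← heq] at hmem
      simp at hmem
    · obtain ⟨q, -, hq⟩ := Finset.mem_image.1 h0
      have hq2 : (q : ℕ) < (w.1 : ℕ) := q.2
      have hqr : (q : ℕ) < r := lt_trans hq2 w.1.2
      have h1 := hw ⟨q, hqr⟩
      rw [symParts_lt w ⟨q, hqr⟩ hq2, Finset.mem_singleton] at h1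
      have h1' : x ⟨(q : ℕ), hqr⟩ = some (w.2 q) := h1
      have he : (⟨(q : ℕ), hqr⟩ : Fin r) = w.1 := hinj (by rw [h1', hq])
      have := congrArg Fin.val he
      simp only at this
      omega

/-- Counting: the number of injective words of length `< r` over `Fin r`
is `⌊(e−1)·r!⌋`. -/
lemma card_idx (r : ℕ) (hr : 1 ≤ r) :
    Fintype.card (Idx r) = ⌊(Real.exp 1 - 1) * (Nat.factorial r : ℝ)⌋₊ := by
  have hcard : Fintype.card (Idx r) = ∑ j ∈ range r, r.descFactorial j := by
    rw [Fintype.card_sigma, ← Fin.sum_univ_eq_sum_range]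
    congr 1; ext j
    rw [Fintype.card_embedding_eq, Fintype.card_fin, Fintype.card_fin]
  set N : ℕ := ∑ j ∈ range r, r.descFactorial j with hN
  rw [hcard]
  have hfac : ∀ i : ℕ, (0:ℝ) < (Nat.factorial i : ℝ) := fun i => by
    exact_mod_cast Nat.factorial_pos i
  have hNval : (N : ℝ) = ∑ j ∈ range r, (r.factorial : ℝ) / ((r - j).factorial : ℝ) := by
    rw [hN]
    push_cast
    apply Finset.sum_congr rfl
    intro j hj
    rw [mem_range] at hj
    rw [eq_div_iff (ne_of_gt (hfac _)), ← Nat.cast_mul, mul_comm,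
      Nat.factorial_mul_descFactorial (le_of_lt hj)]
  have hreflect : ∑ j ∈ range r, (r.factorial : ℝ) / ((r - j).factorial : ℝ)
      = ∑ j ∈ range r, (r.factorial : ℝ) / ((j+1).factorial : ℝ) := by
    rw [← Finset.sum_range_reflect (fun j => (r.factorial : ℝ) / ((j+1).factorial : ℝ)) r]
    apply Finset.sum_congr rfl
    intro j hj
    rw [mem_range] at hj
    have h : r - 1 - j + 1 = r - j := by omega
    rw [h]
  have hsum : (N : ℝ) + (r.factorial : ℝ)
      = ∑ i ∈ range (r+1), (r.factorial : ℝ) / (i.factorial : ℝ) := by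
    rw [Finset.sum_range_succ' (fun i => (r.factorial : ℝ) / (i.factorial : ℝ)) r]
    simp [hNval, hreflect]
  have hS_le : ∑ i ∈ range (r+1), (1:ℝ) / (i.factorial : ℝ) ≤ Real.exp 1 := by
    have := Real.sum_le_exp_of_nonneg (x := 1) zero_le_one (r+1)
    simpa using this
  have hb := Real.exp_bound (x := (1:ℝ)) (by norm_num) (n := r+1) (by omega)
  simp only [one_pow, abs_one, one_mul] at hb
  have hS_ge := (abs_sub_le_iff.1 hb).1
  have hmul : (∑ i ∈ range (r+1), (1:ℝ) / (i.factorial : ℝ)) * (r.factorial : ℝ)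
      = ∑ i ∈ range (r+1), (r.factorial : ℝ) / (i.factorial : ℝ) := by
    rw [Finset.sum_mul]
    apply Finset.sum_congr rfl
    intro i _
    ring
  have hkey : (∑ i ∈ range (r+1), (1:ℝ) / (i.factorial : ℝ) - 1) * (r.factorial : ℝ)
      = (N : ℝ) := by
    rw [sub_mul, hmul, one_mul, ← hsum]; ring
  have hlow : (N : ℝ) ≤ (Real.exp 1 - 1) * (r.factorial : ℝ) := by
    nlinarith [hfac r, hS_le, hkey]
  have herr : (r.factorial : ℝ) * (((r+1).succ : ℝ) / (((r+1).factorial : ℝ) * ((r+1 : ℕ) : ℝ))) < 1 := by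
    rw [Nat.factorial_succ, mul_div_assoc']
    push_cast
    rw [div_lt_one (by positivity)]
    have h1 : (1:ℝ) ≤ (r:ℝ) := by exact_mod_cast hr
    nlinarith [mul_lt_mul_of_pos_left
      (show (r:ℝ)+1+1 < ((r:ℝ)+1)*((r:ℝ)+1) by nlinarith) (hfac r)]
  have hhigh : (Real.exp 1 - 1) * (r.factorial : ℝ) < (N : ℝ) + 1 := by
    nlinarith [hfac r, hS_ge, hkey, herr]
  symm
  rw [Nat.floor_eq_iff (by nlinarith [hfac r])]
  exact ⟨hlow, by push_cast; linarith⟩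

end Statement8Aux

open Statement8Aux in
/-- Fix `r ≥ 2`, the symbol set `S = {0,…,r−1,*}` (modelled as
`Option (Fin r)`, with `none` playing the role of `*`), and pairwise disjoint nonempty
finite sets `α₁,…,α_r`. Let `A` be the complete `r`-partite `r`-graph whose `i`-th
part is `S × α_i`, and let `C` consist of those edges of `A` whose set of first
coordinates is NOT `{0,1,…,r−1}`. Then the edge set of `C` can be partitioned into
`⌊(e−1)·r!⌋` complete `r`-partite `r`-graphs. -/
theorem statement8 {V : Type*} (r : ℕ) (hr : 2 ≤ r)
    (α : Fin r → Finset V) (hne : ∀ i, (α i).Nonempty)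
    (hdisj : ∀ i j, i ≠ j → Disjoint (α i) (α j))
    (A : CompleteMultipartite r (Option (Fin r) × V))
    (hA : ∀ i, A.parts i = (Finset.univ : Finset (Option (Fin r))) ×ˢ α i) :
    ∃ B : Fin ⌊(Real.exp 1 - 1) * (Nat.factorial r : ℝ)⌋₊ →
        CompleteMultipartite r (Option (Fin r) × V),
      ∀ e : Finset (Option (Fin r) × V),
        (e ∈ A.edges ∧ ¬ ∀ c : Fin r, ∃ p ∈ e, p.1 = some c) ↔
          ∃! j, e ∈ (B j).edges := by
  classical
  -- the boxes
  have hbdisj : ∀ (w : Idx r) (i j : Fin r), i ≠ j →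
      Disjoint (symParts w i ×ˢ α i) (symParts w j ×ˢ α j) := by
    intro w i j hij
    rw [Finset.disjoint_left]
    intro p hp1 hp2
    rw [Finset.mem_product] at hp1 hp2
    exact Finset.disjoint_left.1 (hdisj i j hij) hp1.2 hp2.2
  let box : Idx r → CompleteMultipartite r (Option (Fin r) × V) := fun w =>
    { parts := fun i => symParts w i ×ˢ α i
      parts_nonempty := fun i => (symParts_nonempty w i).product (hne i)
      parts_disjoint := fun i j hij => hbdisj w i j hij }
  have hboxA : ∀ (w : Idx r) (i : Fin r), (box w).parts i ⊆ A.parts i := by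
    intro w i
    rw [hA i]
    exact Finset.product_subset_product (Finset.subset_univ _) (le_refl _)
  -- uniqueness of the choice function of an edge
  have huniq_f : ∀ (e : Finset (Option (Fin r) × V)) (f f' : Fin r → Option (Fin r) × V),
      (∀ i, f i ∈ A.parts i) → (∀ v, v ∈ e ↔ ∃ i, v = f i) →
      (∀ i, f' i ∈ A.parts i) → (∀ v, v ∈ e ↔ ∃ i, v = f' i) → f = f' := by
    intro e f f' hf1 hf2 hf'1 hf'2
    funext i
    have hf'e : f' i ∈ e := (hf'2 (f' i)).2 ⟨i, rfl⟩
    obtain ⟨k, hk⟩ := (hf2 (f' i)).1 hf'e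
    by_cases hik : k = i
    · rw [hk, hik]
    · exfalso
      have h1 : f' i ∈ A.parts k := by rw [hk]; exact hf1 k
      exact Finset.disjoint_left.1 (A.parts_disjoint i k (fun h => hik h.symm))
        (hf'1 i) h1
  have hcard := card_idx r (by omega)
  let eqv : Idx r ≃ Fin ⌊(Real.exp 1 - 1) * (Nat.factorial r : ℝ)⌋₊ :=
    Fintype.equivFinOfCardEq hcard
  refine ⟨fun k => box (eqv.symm k), ?_⟩
  intro e
  constructor
  · rintro ⟨⟨f, hf1, hf2⟩, hbad⟩
    set x : Fin r → Option (Fin r) := fun i => (f i).1 with hx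
    have hfα : ∀ i, (f i).2 ∈ α i := by
      intro i
      have := hf1 i
      rw [hA i, Finset.mem_product] at this
      exact this.2
    have hxbad : ¬ ∀ c : Fin r, ∃ i, x i = some c := by
      intro h
      apply hbad
      intro c
      obtain ⟨i, hi⟩ := h c
      exact ⟨f i, (hf2 (f i)).2 ⟨i, rfl⟩, hi⟩
    obtain ⟨w, hwmem, hwuniq⟩ := (key x).1 hxbad
    refine ⟨eqv w, ⟨f, ?_, hf2⟩, ?_⟩
    · intro i
      show f i ∈ (box (eqv.symm (eqv w))).parts i
      rw [Equiv.symm_apply_apply]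
      show f i ∈ symParts w i ×ˢ α i
      rw [Finset.mem_product]
      exact ⟨hwmem i, hfα i⟩
    · rintro k ⟨f', hf'1, hf'2⟩
      have hf'A : ∀ i, f' i ∈ A.parts i := fun i => hboxA (eqv.symm k) i (hf'1 i)
      have hff : f = f' := huniq_f e f f' hf1 hf2 hf'A hf'2
      have hxmem : ∀ i, x i ∈ symParts (eqv.symm k) i := by
        intro i
        have := hf'1 i
        rw [show (box (eqv.symm k)).parts i = symParts (eqv.symm k) i ×ˢ α i from rfl,
          Finset.mem_product] at this
        rw [hx, hff]
        exact this.1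
      have := hwuniq (eqv.symm k) hxmem
      rw [← this, Equiv.apply_symm_apply]
  · rintro ⟨k, ⟨f, hf1, hf2⟩, huk⟩
    have hfA : ∀ i, f i ∈ A.parts i := fun i => hboxA (eqv.symm k) i (hf1 i)
    set x : Fin r → Option (Fin r) := fun i => (f i).1 with hx
    have hfsym : ∀ i, x i ∈ symParts (eqv.symm k) i ∧ (f i).2 ∈ α i := by
      intro i
      have := hf1 i
      rw [show (box (eqv.symm k)).parts i = symParts (eqv.symm k) i ×ˢ α i from rfl,
        Finset.mem_product] at this
      exact this
    have hxbad : ¬ ∀ c : Fin r, ∃ i, x i = some c := by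
      apply (key x).2
      refine ⟨eqv.symm k, fun i => (hfsym i).1, ?_⟩
      intro w' hw'
      have hew' : e ∈ ((fun k => box (eqv.symm k)) (eqv w')).edges := by
        refine ⟨f, ?_, hf2⟩
        intro i
        show f i ∈ (box (eqv.symm (eqv w'))).parts i
        rw [Equiv.symm_apply_apply]
        show f i ∈ symParts w' i ×ˢ α i
        rw [Finset.mem_product]
        exact ⟨hw' i, (hfsym i).2⟩
      have := huk (eqv w') hew'
      rw [← this, Equiv.symm_apply_apply]
    refine ⟨⟨f, hfA, hf2⟩, ?_⟩
    intro hall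
    apply hxbad
    intro c
    obtain ⟨p, hpe, hpc⟩ := hall c
    obtain ⟨i, hi⟩ := (hf2 p).1 hpe
    exact ⟨i, by rw [hx]; rw [hi] at hpc; exact hpc⟩
end

section
/- For r ≥ 2 and m ≥ 1, the complete r-partite r-graph partition numbers of the hypergraphs G_m^r satisfy the recurrence f_r(G_{m+1}^r) ≤ ⌊(e−1)·r!⌋ · f_r(G_m^r) + 1. -/
/-- The edge set of the hypergraph `G_m^r`: vertices are `{0,…,r−1,*}^m` (modelled as
`Fin m → Option (Fin r)`, with `none` playing the role of `*`), and edges are the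
`r`-sets `e` of vertices for which some coordinate `j` has
`{u j | u ∈ e} = {0,…,r−1}`. -/
def Gedges (r m : ℕ) : Set (Finset (Fin m → Option (Fin r))) :=
  {e | e.card = r ∧ ∃ j : Fin m, ∀ c : Fin r, ∃ u ∈ e, u j = some c}

/-- `partitionNumber r E` is the minimum number of complete `r`-partite `r`-graphs into
which the edge set `E` can be partitioned (every member of `E` lies in exactly one of
them, and every edge of each of them lies in `E`). -/
noncomputable def partitionNumber (r : ℕ) {V : Type*} (E : Set (Finset V)) : ℕ :=
  sInf {t | ∃ B : Fin t → CompleteMultipartite r V,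
    ∀ e, e ∈ E ↔ ∃! j, e ∈ (B j).edges}

/-- `coverNumber r E` is the minimum number of complete `r`-partite `r`-graphs needed so
that every member of `E` is an edge of at least one of them. -/
noncomputable def coverNumber (r : ℕ) {V : Type*} (E : Set (Finset V)) : ℕ :=
  sInf {t | ∃ B : Fin t → CompleteMultipartite r V,
    ∀ e ∈ E, ∃ j, e ∈ (B j).edges}

namespace S9

/-- Color `i` viewed as an element of `Fin r`, for `i : Fin c.val`, `c : Fin r`. -/
def ival {r : ℕ} (c : Fin r) (i : Fin c.val) : Fin r := ⟨i.1, i.2.trans c.2⟩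

lemma ival_ne {r : ℕ} (c : Fin r) (i : Fin c.val) : ival c i ≠ c := by
  intro h
  have := congrArg Fin.val h
  simp only [ival] at this
  omega

lemma ival_inj {r : ℕ} {c c' : Fin r} {i : Fin c.val} {i' : Fin c'.val}
    (h : ival c i = ival c' i') : i.1 = i'.1 := congrArg Fin.val h

/-- Index type for the boxes: a color `c` (the least missing color) together with an
injective tuple of positions of first occurrences of colors `0, …, c-1`. -/
def Idx (r : ℕ) := Σ c : Fin r, Fin c.val ↪ Fin r

noncomputable instance (r : ℕ) : Fintype (Idx r) := by
  unfold Idx; infer_instance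

/-- The per-coordinate value sets of a box. -/
noncomputable def boxS {r : ℕ} (x : Idx r) (k : Fin r) : Finset (Option (Fin r)) :=
  if h : ∃ i, x.2 i = k then {some (ival x.1 h.choose)}
  else Finset.univ.filter (fun v => v ≠ some x.1 ∧ ∀ i, k < x.2 i → v ≠ some (ival x.1 i))

lemma boxS_nonempty {r : ℕ} (x : Idx r) (k : Fin r) : (boxS x k).Nonempty := by
  unfold boxS
  split
  · exact Finset.singleton_nonempty _
  · exact ⟨none, by simp⟩

lemma boxS_ne {r : ℕ} (x : Idx r) (k : Fin r) {v : Option (Fin r)} (hv : v ∈ boxS x k) :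
    v ≠ some x.1 := by
  unfold boxS at hv
  split at hv
  · rw [Finset.mem_singleton] at hv
    subst hv
    simpa using (ival_ne x.1 _)
  · simp only [Finset.mem_filter] at hv
    exact hv.2.1

def InBox {r : ℕ} (x : Idx r) (g : Fin r → Option (Fin r)) : Prop := ∀ k, g k ∈ boxS x k

lemma InBox.apply_pos {r : ℕ} {x : Idx r} {g : Fin r → Option (Fin r)} (hg : InBox x g)
    (i : Fin x.1.val) : g (x.2 i) = some (ival x.1 i) := by
  have h := hg (x.2 i)
  unfold boxS at h
  rw [dif_pos ⟨i, rfl⟩] at h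
  rw [Finset.mem_singleton] at h
  have hch : x.2 (⟨i, rfl⟩ : ∃ i', x.2 i' = x.2 i).choose = x.2 i :=
    (⟨i, rfl⟩ : ∃ i', x.2 i' = x.2 i).choose_spec
  rw [x.2.injective hch] at h
  exact h

lemma InBox.ne_missing {r : ℕ} {x : Idx r} {g : Fin r → Option (Fin r)} (hg : InBox x g)
    (k : Fin r) : g k ≠ some x.1 := boxS_ne x k (hg k)

lemma InBox.first_occ {r : ℕ} {x : Idx r} {g : Fin r → Option (Fin r)} (hg : InBox x g)
    (i : Fin x.1.val) {k : Fin r} (hk : k < x.2 i) : g k ≠ some (ival x.1 i) := by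
  have h := hg k
  unfold boxS at h
  split at h
  · next hex =>
    rw [Finset.mem_singleton] at h
    rw [h]
    intro hc
    have h1 : ival x.1 hex.choose = ival x.1 i := by injection hc
    have h2 : hex.choose = i := Fin.ext (ival_inj h1)
    have h3 := hex.choose_spec
    rw [h2] at h3
    rw [h3] at hk
    exact lt_irrefl _ hk
  · simp only [Finset.mem_filter] at h
    exact h.2.2 i hk

lemma box_exists {r : ℕ} (hr : 1 ≤ r) {g : Fin r → Option (Fin r)}
    (hg : ∃ c : Fin r, ∀ k, g k ≠ some c) : ∃ x : Idx r, InBox x g := by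
  classical
  -- least missing color
  set M : Finset (Fin r) := Finset.univ.filter (fun c => ∀ k, g k ≠ some c) with hM
  have hMne : M.Nonempty := by
    obtain ⟨c, hc⟩ := hg
    exact ⟨c, by simp [hM, hc]⟩
  set c : Fin r := M.min' hMne with hc
  have hcM : c ∈ M := M.min'_mem hMne
  have hcmiss : ∀ k, g k ≠ some c := by
    have := hcM
    simp only [hM, Finset.mem_filter] at this
    exact this.2
  have hlt : ∀ c' : Fin r, c' < c → ∃ k, g k = some c' := by
    intro c' hc'
    by_contra hno
    push_neg at hno
    have : c' ∈ M := by simp [hM, hno]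
    exact absurd (M.min'_le c' this) (not_le.mpr hc')
  -- first-occurrence positions
  have hex : ∀ i : Fin c.val, ∃ k : Fin r, g k = some (ival c i) := by
    intro i
    exact hlt (ival c i) (by simpa [ival, Fin.lt_def] using i.2)
  set K : Fin c.val → Finset (Fin r) :=
    fun i => Finset.univ.filter (fun k => g k = some (ival c i)) with hK
  have hKne : ∀ i, (K i).Nonempty := by
    intro i
    obtain ⟨k, hk⟩ := hex i
    exact ⟨k, by simp [hK, hk]⟩
  set p : Fin c.val → Fin r := fun i => (K i).min' (hKne i) with hp
  have hpval : ∀ i, g (p i) = some (ival c i) := by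
    intro i
    have := (K i).min'_mem (hKne i)
    simp only [hK, Finset.mem_filter] at this
    exact this.2
  have hpmin : ∀ i k, g k = some (ival c i) → p i ≤ k := by
    intro i k hk
    exact (K i).min'_le k (by simp [hK, hk])
  have hpinj : Function.Injective p := by
    intro i i' h
    have := hpval i
    rw [h, hpval i'] at this
    exact Fin.ext (ival_inj (by injection this)).symm
  refine ⟨⟨c, ⟨p, hpinj⟩⟩, ?_⟩
  intro k
  unfold boxS
  split
  · next hexk =>
    simp only [Function.Embedding.coeFn_mk] at hexk ⊢
    have h1 := hpval hexk.choose
    rw [hexk.choose_spec] at h1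
    rw [Finset.mem_singleton, h1]
  · next hexk =>
    simp only [Function.Embedding.coeFn_mk, Finset.mem_filter, Finset.mem_univ, true_and] at hexk ⊢
    refine ⟨hcmiss k, ?_⟩
    intro i hk hgk
    exact absurd (hpmin i k hgk) (not_le.mpr hk)

lemma box_unique {r : ℕ} {x x' : Idx r} {g : Fin r → Option (Fin r)}
    (h : InBox x g) (h' : InBox x' g) : x = x' := by
  obtain ⟨c, p⟩ := x
  obtain ⟨c', p'⟩ := x'
  have hcc : c = c' := by
    by_contra hne
    rcases lt_or_gt_of_ne hne with hlt | hlt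
    · -- c < c' : color c is hit by g via box x'
      have hi : (c : ℕ) < c'.val := hlt
      have := h'.apply_pos (⟨c.1, hi⟩ : Fin c'.val)
      have hival : ival c' (⟨c.1, hi⟩ : Fin c'.val) = c := Fin.ext rfl
      rw [hival] at this
      exact h.ne_missing _ this
    · have hi : (c' : ℕ) < c.val := hlt
      have := h.apply_pos (⟨c'.1, hi⟩ : Fin c.val)
      have hival : ival c (⟨c'.1, hi⟩ : Fin c.val) = c' := Fin.ext rfl
      rw [hival] at this
      exact h'.ne_missing _ this
  subst hcc
  have hpp : p = p' := by
    ext i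
    -- show p i = p' i
    have h1 : g (p i) = some (ival c i) := h.apply_pos i
    have h2 : g (p' i) = some (ival c i) := h'.apply_pos i
    have hle1 : ¬ (p i < p' i) := fun hk => h'.first_occ i hk h1
    have hle2 : ¬ (p' i < p i) := fun hk => h.first_occ i hk h2
    have : p i = p' i := le_antisymm (not_lt.mp hle2) (not_lt.mp hle1)
    exact congrArg Fin.val this
  rw [hpp]

lemma card_Idx_le (r : ℕ) :
    Fintype.card (Idx r) ≤ ⌊(Real.exp 1 - 1) * (Nat.factorial r : ℝ)⌋₊ := by
  classical
  have hcard : Fintype.card (Idx r) = ∑ c : Fin r, r.descFactorial c.val := by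
    rw [show Fintype.card (Idx r) = ∑ c : Fin r, Fintype.card (Fin c.val ↪ Fin r) from
      Fintype.card_sigma]
    congr 1
    ext c
    rw [Fintype.card_embedding_eq, Fintype.card_fin, Fintype.card_fin]
  have he1 : (0:ℝ) ≤ Real.exp 1 - 1 := by
    have := Real.add_one_le_exp (1:ℝ)
    linarith
  rw [hcard]
  rw [Nat.le_floor_iff (mul_nonneg he1 (by positivity))]
  push_cast
  rw [Fin.sum_univ_eq_sum_range (fun c => (r.descFactorial c : ℝ))]
  have hdesc : ∀ c ∈ Finset.range r, (r.descFactorial c : ℝ)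
      = (r.factorial : ℝ) / ((r - c).factorial : ℝ) := by
    intro c hc
    rw [Finset.mem_range] at hc
    have := Nat.factorial_mul_descFactorial hc.le
    rw [eq_div_iff (by positivity)]
    rw [mul_comm]
    exact_mod_cast this
  rw [Finset.sum_congr rfl hdesc]
  rw [← Finset.sum_range_reflect (fun c => (r.factorial : ℝ) / ((r - c).factorial : ℝ)) r]
  have href : ∀ c ∈ Finset.range r, (r.factorial : ℝ) / ((r - (r - 1 - c)).factorial : ℝ)
      = (r.factorial : ℝ) / (((c+1)).factorial : ℝ) := by
    intro c hc
    rw [Finset.mem_range] at hc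
    congr 3
    omega
  rw [Finset.sum_congr rfl href]
  have hexp : ∑ c ∈ Finset.range r, 1 / ((c+1).factorial : ℝ) ≤ Real.exp 1 - 1 := by
    have h := Real.sum_le_exp_of_nonneg zero_le_one (r+1)
    rw [Finset.sum_range_succ'] at h
    simp only [one_pow, Nat.factorial_zero, Nat.cast_one, div_one] at h
    linarith
  calc ∑ c ∈ Finset.range r, (r.factorial : ℝ) / ((c+1).factorial : ℝ)
      = (r.factorial : ℝ) * ∑ c ∈ Finset.range r, 1 / ((c+1).factorial : ℝ) := by
        rw [Finset.mul_sum]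
        congr 1
        ext c
        ring
    _ ≤ (r.factorial : ℝ) * (Real.exp 1 - 1) := by
        exact mul_le_mul_of_nonneg_left hexp (by positivity)
    _ = (Real.exp 1 - 1) * (r.factorial : ℝ) := mul_comm _ _

section General

variable {r : ℕ} {V : Type*} [DecidableEq V]

lemma mem_edges_iff (B : CompleteMultipartite r V) {e : Finset V} :
    e ∈ B.edges ↔ ∃ f : Fin r → V, (∀ i, f i ∈ B.parts i) ∧
      e = Finset.image f Finset.univ := by
  constructor
  · rintro ⟨f, hf, he⟩
    refine ⟨f, hf, ?_⟩
    ext v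
    simp only [Finset.mem_image, Finset.mem_univ, true_and]
    rw [he v]
    exact ⟨fun ⟨i, hi⟩ => ⟨i, hi.symm⟩, fun ⟨i, hi⟩ => ⟨i, hi.symm⟩⟩
  · rintro ⟨f, hf, he⟩
    refine ⟨f, hf, ?_⟩
    intro v
    subst he
    simp only [Finset.mem_image, Finset.mem_univ, true_and]
    exact ⟨fun ⟨i, hi⟩ => ⟨i, hi.symm⟩, fun ⟨i, hi⟩ => ⟨i, hi.symm⟩⟩

lemma transversal_injective (B : CompleteMultipartite r V) {f : Fin r → V}
    (hf : ∀ i, f i ∈ B.parts i) : Function.Injective f := by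
  intro i j hij
  by_contra hne
  exact Finset.disjoint_left.mp (B.parts_disjoint i j hne) (hf i) (hij ▸ hf j)

lemma edges_card (B : CompleteMultipartite r V) {e : Finset V} (he : e ∈ B.edges) :
    e.card = r := by
  rw [mem_edges_iff] at he
  obtain ⟨f, hf, rfl⟩ := he
  rw [Finset.card_image_of_injective _ (transversal_injective B hf), Finset.card_univ,
    Fintype.card_fin]

lemma transversal_unique (B : CompleteMultipartite r V) {f f' : Fin r → V}
    (hf : ∀ i, f i ∈ B.parts i) (hf' : ∀ i, f' i ∈ B.parts i)
    (h : Finset.image f Finset.univ = Finset.image f' Finset.univ) : f = f' := by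
  funext i
  have : f i ∈ Finset.image f' Finset.univ := by
    rw [← h]
    exact Finset.mem_image_of_mem f (Finset.mem_univ i)
  obtain ⟨i', -, hi'⟩ := Finset.mem_image.mp this
  have hii : i' = i := by
    by_contra hne
    refine Finset.disjoint_left.mp (B.parts_disjoint i' i hne) (hf' i') ?_
    rw [hi']
    exact hf i
  rw [← hi', hii]

end General

section Blocks

variable {r m : ℕ}

abbrev Vtx (r m : ℕ) := Fin m → Option (Fin r)

/-- The extra block: parts are the sets of vertices with a fixed last coordinate color. -/
def topBlock (r m : ℕ) : CompleteMultipartite r (Vtx r (m+1)) where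
  parts k := Finset.univ.filter (fun u => u (Fin.last m) = some k)
  parts_nonempty k := ⟨Fin.snoc (fun _ => none) (some k), by
    simp [Finset.mem_filter]⟩
  parts_disjoint i j hij := by
    rw [Finset.disjoint_left]
    intro u hu hu'
    simp only [Finset.mem_filter, Finset.mem_univ, true_and] at hu hu'
    rw [hu] at hu'
    exact hij (by injection hu')

/-- A lifted block: a block of `G_m` times a box. -/
noncomputable def liftBlock (B : CompleteMultipartite r (Vtx r m)) (x : Idx r) :
    CompleteMultipartite r (Vtx r (m+1)) where
  parts k := ((B.parts k) ×ˢ (boxS x k)).image (fun q => Fin.snoc q.1 q.2)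
  parts_nonempty k := ((B.parts_nonempty k).product (boxS_nonempty x k)).image _
  parts_disjoint i j hij := by
    rw [Finset.disjoint_left]
    intro u hu hu'
    simp only [Finset.mem_image, Finset.mem_product] at hu hu'
    obtain ⟨⟨a, b⟩, ⟨ha, -⟩, rfl⟩ := hu
    obtain ⟨⟨a', b'⟩, ⟨ha', -⟩, he⟩ := hu'
    have : a' = a := by
      have := congrArg Fin.init he
      rwa [Fin.init_snoc, Fin.init_snoc] at this
    rw [this] at ha'
    exact Finset.disjoint_left.mp (B.parts_disjoint i j hij) ha ha'

lemma mem_lift_parts {B : CompleteMultipartite r (Vtx r m)} {x : Idx r} {k : Fin r}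
    {u : Vtx r (m+1)} :
    u ∈ (liftBlock B x).parts k ↔
      Fin.init u ∈ B.parts k ∧ u (Fin.last m) ∈ boxS x k := by
  simp only [liftBlock, Finset.mem_image, Finset.mem_product]
  constructor
  · rintro ⟨⟨a, b⟩, ⟨ha, hb⟩, rfl⟩
    rw [Fin.init_snoc, Fin.snoc_last]
    exact ⟨ha, hb⟩
  · rintro ⟨h1, h2⟩
    exact ⟨⟨Fin.init u, u (Fin.last m)⟩, ⟨h1, h2⟩, Fin.snoc_init_self u⟩

/-- Structure of edges of a lifted block. -/
lemma lift_edges_iff {B : CompleteMultipartite r (Vtx r m)} {x : Idx r}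
    {e : Finset (Vtx r (m+1))} :
    e ∈ (liftBlock B x).edges ↔
      ∃ a : Fin r → Vtx r m, ∃ b : Fin r → Option (Fin r),
        (∀ k, a k ∈ B.parts k) ∧ (∀ k, b k ∈ boxS x k) ∧
        e = Finset.image (fun k => Fin.snoc (a k) (b k)) Finset.univ := by
  rw [mem_edges_iff]
  constructor
  · rintro ⟨f, hf, rfl⟩
    refine ⟨fun k => Fin.init (f k), fun k => f k (Fin.last m), ?_, ?_, ?_⟩
    · intro k; exact (mem_lift_parts.mp (hf k)).1
    · intro k; exact (mem_lift_parts.mp (hf k)).2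
    · congr 1
      funext k
      exact (Fin.snoc_init_self (f k)).symm
  · rintro ⟨a, b, ha, hb, rfl⟩
    refine ⟨fun k => Fin.snoc (a k) (b k), ?_, rfl⟩
    intro k
    rw [mem_lift_parts]
    refine ⟨?_, ?_⟩
    · rw [Fin.init_snoc]; exact ha k
    · simpa using hb k

lemma lift_proj {B : CompleteMultipartite r (Vtx r m)} {x : Idx r}
    {e : Finset (Vtx r (m+1))} (he : e ∈ (liftBlock B x).edges) :
    Finset.image Fin.init e ∈ B.edges := by
  obtain ⟨a, b, ha, hb, rfl⟩ := lift_edges_iff.mp he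
  rw [mem_edges_iff]
  refine ⟨a, ha, ?_⟩
  rw [Finset.image_image]
  congr 1
  funext k
  simp only [Function.comp_apply, Fin.init_snoc]

/-- Every vertex of an edge of a lifted block avoids the missing color in the last
coordinate. -/
lemma lift_last_ne {B : CompleteMultipartite r (Vtx r m)} {x : Idx r}
    {e : Finset (Vtx r (m+1))} (he : e ∈ (liftBlock B x).edges) :
    ∀ u ∈ e, u (Fin.last m) ≠ some x.1 := by
  obtain ⟨a, b, ha, hb, rfl⟩ := lift_edges_iff.mp he
  intro u hu
  simp only [Finset.mem_image, Finset.mem_univ, true_and] at hu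
  obtain ⟨k, rfl⟩ := hu
  rw [Fin.snoc_last]
  exact boxS_ne x k (hb k)

/-- If the projection of an edge of a lifted block over `B₀` is also an edge of `B₁`,
then `e` belongs to some lifted block over `B₁`. -/
lemma lift_swap (hr : 1 ≤ r) {B₀ B₁ : CompleteMultipartite r (Vtx r m)} {x : Idx r}
    {e : Finset (Vtx r (m+1))} (he : e ∈ (liftBlock B₀ x).edges)
    (hp : Finset.image Fin.init e ∈ B₁.edges) :
    ∃ x' : Idx r, e ∈ (liftBlock B₁ x').edges := by
  obtain ⟨a, b, ha, hb, rfl⟩ := lift_edges_iff.mp he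
  set F : Fin r → Vtx r (m+1) := fun k => Fin.snoc (a k) (b k) with hF
  have hainj : Function.Injective a := transversal_injective B₀ ha
  have hFinj : Function.Injective F := by
    intro k k' hk
    apply hainj
    have := congrArg Fin.init hk
    rwa [hF, Fin.init_snoc, Fin.init_snoc] at this
  obtain ⟨f', hf', hf'e⟩ := (mem_edges_iff B₁).mp hp
  -- each f' k is some a (σ k)
  have hσ : ∀ k, ∃ k', f' k = a k' := by
    intro k
    have : f' k ∈ Finset.image Fin.init (Finset.image F Finset.univ) := by
      rw [hf'e]
      exact Finset.mem_image_of_mem f' (Finset.mem_univ k)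
    rw [Finset.image_image] at this
    simp only [Finset.mem_image, Finset.mem_univ, true_and] at this
    obtain ⟨k', hk'⟩ := this
    refine ⟨k', ?_⟩
    rw [← hk']
    simp [hF, Fin.init_snoc]
  choose σ hσ using hσ
  have hgmiss : ∃ c : Fin r, ∀ k, (b ∘ σ) k ≠ some c :=
    ⟨x.1, fun k => boxS_ne x (σ k) (hb (σ k))⟩
  obtain ⟨x', hx'⟩ := box_exists hr hgmiss
  refine ⟨x', lift_edges_iff.mpr ⟨f', b ∘ σ, hf', fun k => hx' k, ?_⟩⟩
  -- image of new transversal equals e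
  have hsub : Finset.image (fun k => Fin.snoc (f' k) ((b ∘ σ) k)) Finset.univ ⊆
      Finset.image F Finset.univ := by
    intro u hu
    simp only [Finset.mem_image, Finset.mem_univ, true_and] at hu ⊢
    obtain ⟨k, rfl⟩ := hu
    refine ⟨σ k, ?_⟩
    simp only [hF, Function.comp_apply, hσ k]
  have hinj' : Function.Injective (fun k => Fin.snoc (f' k) ((b ∘ σ) k) : Fin r → Vtx r (m+1)) := by
    intro k k' hk
    apply transversal_injective B₁ hf'
    have := congrArg Fin.init hk
    rwa [Fin.init_snoc, Fin.init_snoc] at this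
  refine (Finset.eq_of_subset_of_card_le hsub ?_).symm
  rw [Finset.card_image_of_injective _ hFinj, Finset.card_image_of_injective _ hinj']


lemma lift_card {B : CompleteMultipartite r (Vtx r m)} {x : Idx r}
    {e : Finset (Vtx r (m+1))} (he : e ∈ (liftBlock B x).edges) : e.card = r :=
  edges_card _ he

/-- If the projection is an edge of `G_m`, a lifted edge is an edge of `G_{m+1}`. -/
lemma lift_mem_Gedges {B : CompleteMultipartite r (Vtx r m)} {x : Idx r}
    {e : Finset (Vtx r (m+1))} (he : e ∈ (liftBlock B x).edges)
    (hp : Finset.image Fin.init e ∈ Gedges r m) : e ∈ Gedges r (m+1) := by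
  refine ⟨lift_card he, ?_⟩
  obtain ⟨-, j₁, hj₁⟩ := hp
  refine ⟨Fin.castSucc j₁, ?_⟩
  intro c
  obtain ⟨v, hv, hvc⟩ := hj₁ c
  simp only [Finset.mem_image] at hv
  obtain ⟨u, hu, rfl⟩ := hv
  exact ⟨u, hu, hvc⟩

/-- Edges of the top block are edges of `G_{m+1}`. -/
lemma top_mem_Gedges {e : Finset (Vtx r (m+1))} (he : e ∈ (topBlock r m).edges) :
    e ∈ Gedges r (m+1) := by
  refine ⟨edges_card _ he, Fin.last m, ?_⟩
  obtain ⟨f, hf, rfl⟩ := (mem_edges_iff _).mp he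
  intro c
  refine ⟨f c, Finset.mem_image_of_mem f (Finset.mem_univ c), ?_⟩
  have := hf c
  simp only [topBlock, Finset.mem_filter, Finset.mem_univ, true_and] at this
  exact this

lemma top_last_surj {e : Finset (Vtx r (m+1))} (he : e ∈ (topBlock r m).edges) :
    ∀ c, ∃ u ∈ e, u (Fin.last m) = some c := by
  obtain ⟨f, hf, rfl⟩ := (mem_edges_iff _).mp he
  intro c
  refine ⟨f c, Finset.mem_image_of_mem f (Finset.mem_univ c), ?_⟩
  have := hf c
  simp only [topBlock, Finset.mem_filter, Finset.mem_univ, true_and] at this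
  exact this

lemma top_mem_of {e : Finset (Vtx r (m+1))} (hcard : e.card = r)
    (hsur : ∀ c, ∃ u ∈ e, u (Fin.last m) = some c) : e ∈ (topBlock r m).edges := by
  choose w hw hwlast using hsur
  have hwinj : Function.Injective w := by
    intro c c' hc
    have := hwlast c
    rw [hc, hwlast c'] at this
    injection this with h
    exact h.symm
  have hsub : Finset.image w Finset.univ ⊆ e := by
    intro u hu
    simp only [Finset.mem_image, Finset.mem_univ, true_and] at hu
    obtain ⟨c, rfl⟩ := hu
    exact hw c
  have heq : Finset.image w Finset.univ = e := by
    apply Finset.eq_of_subset_of_card_le hsub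
    rw [Finset.card_image_of_injective _ hwinj, Finset.card_univ, Fintype.card_fin, hcard]
  rw [mem_edges_iff]
  refine ⟨w, ?_, heq.symm⟩
  intro c
  simp only [topBlock, Finset.mem_filter, Finset.mem_univ, true_and]
  exact hwlast c

end Blocks

section Key

lemma key {r m t : ℕ} (hr : 1 ≤ r) (B : Fin t → CompleteMultipartite r (Vtx r m))
    (hB : ∀ e, e ∈ Gedges r m ↔ ∃! j, e ∈ (B j).edges) (e : Finset (Vtx r (m+1))) :
    e ∈ Gedges r (m+1) ↔ ∃! J : Option (Idx r × Fin t),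
      e ∈ (J.elim (topBlock r m) (fun q => liftBlock (B q.2) q.1)).edges := by
  constructor
  · rintro ⟨hcard, j₀, hj₀⟩
    by_cases hsur : ∀ c, ∃ u ∈ e, u (Fin.last m) = some c
    · -- the top block is the unique one
      refine ⟨none, top_mem_of hcard hsur, ?_⟩
      rintro (_ | ⟨x, j⟩) hJ
      · rfl
      · exfalso
        obtain ⟨u, hu, hul⟩ := hsur x.1
        exact lift_last_ne hJ u hu hul
    · push_neg at hsur
      obtain ⟨c₀, hc₀⟩ := hsur
      have hj₀last : j₀ ≠ Fin.last m := by
        rintro rfl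
        obtain ⟨u, hu, hul⟩ := hj₀ c₀
        exact hc₀ u hu hul
      obtain ⟨j₁, rfl⟩ := Fin.exists_castSucc_eq.mpr hj₀last
      -- the coordinate map is injective on e
      have hinjcoord : Set.InjOn (fun u : Vtx r (m+1) => u (Fin.castSucc j₁)) ↑e := by
        apply Finset.injOn_of_card_image_eq
        apply le_antisymm Finset.card_image_le
        rw [hcard]
        have hsub2 : Finset.image (fun c : Fin r => (some c : Option (Fin r))) Finset.univ
            ⊆ e.image (fun u => u (Fin.castSucc j₁)) := by
          intro v hv
          simp only [Finset.mem_image, Finset.mem_univ, true_and] at hv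
          obtain ⟨c, rfl⟩ := hv
          obtain ⟨u, hu, hul⟩ := hj₀ c
          exact Finset.mem_image.mpr ⟨u, hu, hul⟩
        calc r = (Finset.image (fun c : Fin r => (some c : Option (Fin r)))
              Finset.univ).card := by
              rw [Finset.card_image_of_injective _ (Option.some_injective _),
                Finset.card_univ, Fintype.card_fin]
          _ ≤ _ := Finset.card_le_card hsub2
      have hinit : Set.InjOn (Fin.init : Vtx r (m+1) → Vtx r m) ↑e := by
        intro u hu u' hu' h
        apply hinjcoord hu hu'
        have := congrFun h j₁
        simpa [Fin.init] using this
      have hEcard : (Finset.image (Fin.init : Vtx r (m+1) → Vtx r m) e).card = r := by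
        rw [Finset.card_image_of_injOn hinit, hcard]
      have hE : Finset.image (Fin.init : Vtx r (m+1) → Vtx r m) e ∈ Gedges r m := by
        refine ⟨hEcard, j₁, ?_⟩
        intro c
        obtain ⟨u, hu, hul⟩ := hj₀ c
        refine ⟨Fin.init u, Finset.mem_image_of_mem _ hu, ?_⟩
        simpa [Fin.init] using hul
      obtain ⟨j, hj, hjun⟩ := (hB _).mp hE
      obtain ⟨f, hf, hfe⟩ := (mem_edges_iff (B j)).mp hj
      have hufex : ∀ k, ∃ u, u ∈ e ∧ Fin.init u = f k := by
        intro k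
        have : f k ∈ Finset.image (Fin.init : Vtx r (m+1) → Vtx r m) e := by
          rw [hfe]
          exact Finset.mem_image_of_mem f (Finset.mem_univ k)
        obtain ⟨u, hu, hui⟩ := Finset.mem_image.mp this
        exact ⟨u, hu, hui⟩
      choose uf hufe hufi using hufex
      set g : Fin r → Option (Fin r) := fun k => uf k (Fin.last m) with hg
      have hsnoc : ∀ k, Fin.snoc (f k) (g k) = uf k := by
        intro k
        rw [← hufi k, hg]
        exact Fin.snoc_init_self _
      obtain ⟨x, hx⟩ := box_exists hr ⟨c₀, fun k => hc₀ _ (hufe k)⟩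
      have hufinj : Function.Injective uf := by
        intro k k' hk
        apply transversal_injective (B j) hf
        rw [← hufi k, ← hufi k', hk]
      have heuf : e = Finset.image uf Finset.univ := by
        refine (Finset.eq_of_subset_of_card_le ?_ ?_).symm
        · intro u hu
          simp only [Finset.mem_image, Finset.mem_univ, true_and] at hu
          obtain ⟨k, rfl⟩ := hu
          exact hufe k
        · rw [hcard, Finset.card_image_of_injective _ hufinj, Finset.card_univ,
            Fintype.card_fin]
      have hmem : e ∈ (liftBlock (B j) x).edges := by
        refine lift_edges_iff.mpr ⟨f, g, hf, hx, ?_⟩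
        rw [heuf]
        congr 1
        funext k
        exact (hsnoc k).symm
      refine ⟨some (x, j), hmem, ?_⟩
      rintro (_ | ⟨x', j'⟩) hJ
      · exfalso
        obtain ⟨u, hu, hul⟩ := top_last_surj hJ c₀
        exact hc₀ u hu hul
      · -- identify the block and the box
        have hproj : Finset.image (Fin.init : Vtx r (m+1) → Vtx r m) e ∈ (B j').edges := lift_proj hJ
        have hjj : j' = j := hjun j' hproj
        subst hjj
        obtain ⟨a, b, ha, hb, he2⟩ := lift_edges_iff.mp hJ
        have hpa : Finset.image (Fin.init : Vtx r (m+1) → Vtx r m) e = Finset.image a Finset.univ := by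
          rw [he2, Finset.image_image]
          congr 1
          funext k
          simp only [Function.comp_apply, Fin.init_snoc]
        have haf : a = f := transversal_unique (B j') ha hf (by rw [← hpa, ← hfe])
        subst haf
        have hbg : b = g := by
          funext k
          have hmem2 : Fin.snoc (a k) (b k) ∈ e := by
            rw [he2]
            exact Finset.mem_image_of_mem _ (Finset.mem_univ k)
          have hinit2 : Fin.init (Fin.snoc (a k) (b k) : Vtx r (m+1)) = Fin.init (uf k) := by
            rw [Fin.init_snoc, hufi k]
          have := hinit hmem2 (hufe k) hinit2
          have hlast := congrFun this (Fin.last m)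
          simpa [Fin.snoc_last, hg] using hlast
        subst hbg
        have : x' = x := box_unique (fun k => hb k) hx
        rw [this]
  · rintro ⟨J, hJ, hJu⟩
    match J, hJ, hJu with
    | none, hJ, _ => exact top_mem_Gedges hJ
    | some ⟨x, j⟩, hJ, hJu =>
      by_cases hproj : Finset.image (Fin.init : Vtx r (m+1) → Vtx r m) e ∈ Gedges r m
      · exact lift_mem_Gedges hJ hproj
      · exfalso
        have hj : Finset.image (Fin.init : Vtx r (m+1) → Vtx r m) e ∈ (B j).edges := lift_proj hJ
        have hnot : ¬ ∃! j', Finset.image (Fin.init : Vtx r (m+1) → Vtx r m) e ∈ (B j').edges :=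
          fun h => hproj ((hB _).mpr h)
        have hsecond : ∃ j', Finset.image (Fin.init : Vtx r (m+1) → Vtx r m) e ∈ (B j').edges ∧ j' ≠ j := by
          by_contra hcon
          push_neg at hcon
          exact hnot ⟨j, hj, fun y hy => hcon y hy⟩
        obtain ⟨j', hj', hne⟩ := hsecond
        obtain ⟨x', hx'⟩ := lift_swap hr hJ hj'
        have heq := hJu (some (x', j')) hx'
        rw [Option.some.injEq, Prod.mk.injEq] at heq
        exact hne heq.2

end Key

section Assemble

/-- Re-index a partition family along an equivalence. -/
lemma reindex {r : ℕ} {V : Type*} {E : Set (Finset V)} {ι : Type*} [Fintype ι]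
    (C : ι → CompleteMultipartite r V)
    (hC : ∀ e, e ∈ E ↔ ∃! J, e ∈ (C J).edges) :
    ∃ B : Fin (Fintype.card ι) → CompleteMultipartite r V,
      ∀ e, e ∈ E ↔ ∃! j, e ∈ (B j).edges := by
  classical
  set Eq := (Fintype.equivFin ι).symm with hEq
  refine ⟨fun i => C (Eq i), ?_⟩
  intro e
  rw [hC e]
  exact (Eq.existsUnique_congr_right (q := fun J => e ∈ (C J).edges)).symm

/-- The one-block partition of `G_1^r`. -/
lemma base (r : ℕ) (hr : 1 ≤ r) :
    ∃ B : Fin 1 → CompleteMultipartite r (Vtx r 1),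
      ∀ e, e ∈ Gedges r 1 ↔ ∃! j, e ∈ (B j).edges := by
  classical
  set w : Fin r → Vtx r 1 := fun i _ => some i with hw
  have hwinj : Function.Injective w := by
    intro i i' h
    have := congrFun h 0
    injection this with h2
  set B0 : CompleteMultipartite r (Vtx r 1) :=
    { parts := fun i => {w i}
      parts_nonempty := fun i => Finset.singleton_nonempty _
      parts_disjoint := by
        intro i j hij
        rw [Finset.disjoint_singleton]
        exact fun h => hij (hwinj h) } with hB0
  refine ⟨fun _ => B0, ?_⟩
  intro e
  constructor
  · rintro ⟨hcard, j, hj⟩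
    choose u hu hul using hj
    have huinj : Function.Injective u := by
      intro c c' h
      have := hul c
      rw [h, hul c'] at this
      injection this with h2
      exact h2.symm
    have himg : Finset.image u Finset.univ = e := by
      apply Finset.eq_of_subset_of_card_le
      · intro v hv
        simp only [Finset.mem_image, Finset.mem_univ, true_and] at hv
        obtain ⟨c, rfl⟩ := hv
        exact hu c
      · rw [hcard, Finset.card_image_of_injective _ huinj, Finset.card_univ,
          Fintype.card_fin]
    have huw : u = w := by
      funext c k
      have hk : k = j := Subsingleton.elim k j
      rw [hk, hul c, hw]
    refine ⟨0, ?_, fun y _ => Subsingleton.elim y 0⟩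
    show e ∈ B0.edges
    rw [mem_edges_iff]
    refine ⟨w, fun i => Finset.mem_singleton_self _, ?_⟩
    rw [← huw, himg]
  · rintro ⟨j, hj, -⟩
    obtain ⟨f, hf, rfl⟩ := (mem_edges_iff _).mp hj
    have hfw : f = w := by
      funext i
      have := hf i
      simp only [hB0, Finset.mem_singleton] at this
      exact this
    subst hfw
    refine ⟨?_, 0, ?_⟩
    · rw [Finset.card_image_of_injective _ hwinj, Finset.card_univ, Fintype.card_fin]
    · intro c
      exact ⟨w c, Finset.mem_image_of_mem _ (Finset.mem_univ c), rfl⟩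

lemma setFor_nonempty (r : ℕ) (hr : 1 ≤ r) :
    ∀ m, 1 ≤ m → {t | ∃ B : Fin t → CompleteMultipartite r (Vtx r m),
      ∀ e, e ∈ Gedges r m ↔ ∃! j, e ∈ (B j).edges}.Nonempty := by
  intro m
  induction m with
  | zero => omega
  | succ m ih =>
    intro _
    by_cases hm : 1 ≤ m
    · obtain ⟨t, B, hB⟩ := ih hm
      obtain ⟨B', hB'⟩ := reindex _ (key hr B hB)
      exact ⟨_, B', hB'⟩
    · have hm0 : m = 0 := by omega
      subst hm0
      obtain ⟨B, hB⟩ := base r hr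
      exact ⟨1, B, hB⟩

end Assemble

end S9

/-- For `r ≥ 2` and `m ≥ 1`, the complete `r`-partite partition
numbers of the hypergraphs `G_m^r` satisfy
`f_r(G_{m+1}^r) ≤ ⌊(e−1)·r!⌋ · f_r(G_m^r) + 1`. -/


theorem statement9 (r m : ℕ) (hr : 2 ≤ r) (hm : 1 ≤ m) :
    partitionNumber r (Gedges r (m + 1)) ≤
      ⌊(Real.exp 1 - 1) * (Nat.factorial r : ℝ)⌋₊ * partitionNumber r (Gedges r m) + 1 := by
  classical
  have hr1 : 1 ≤ r := by omega
  have hne := S9.setFor_nonempty r hr1 m hm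
  have hmem := Nat.sInf_mem hne
  obtain ⟨B, hB⟩ := hmem
  obtain ⟨B', hB'⟩ := S9.reindex _ (S9.key hr1 B hB)
  have hmem' : Fintype.card (Option (S9.Idx r × Fin (sInf
      {t | ∃ B : Fin t → CompleteMultipartite r (S9.Vtx r m),
        ∀ e, e ∈ Gedges r m ↔ ∃! j, e ∈ (B j).edges}))) ∈
      {t | ∃ B : Fin t → CompleteMultipartite r (S9.Vtx r (m+1)),
        ∀ e, e ∈ Gedges r (m+1) ↔ ∃! j, e ∈ (B j).edges} := ⟨B', hB'⟩
  have h1 : partitionNumber r (Gedges r (m + 1)) ≤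
      Fintype.card (Option (S9.Idx r × Fin (sInf
      {t | ∃ B : Fin t → CompleteMultipartite r (S9.Vtx r m),
        ∀ e, e ∈ Gedges r m ↔ ∃! j, e ∈ (B j).edges}))) := Nat.sInf_le hmem'
  have hpm : partitionNumber r (Gedges r m) = sInf
      {t | ∃ B : Fin t → CompleteMultipartite r (S9.Vtx r m),
        ∀ e, e ∈ Gedges r m ↔ ∃! j, e ∈ (B j).edges} := rfl
  have hcardeq : Fintype.card (Option (S9.Idx r × Fin (sInf
      {t | ∃ B : Fin t → CompleteMultipartite r (S9.Vtx r m),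
        ∀ e, e ∈ Gedges r m ↔ ∃! j, e ∈ (B j).edges}))) =
      Fintype.card (S9.Idx r) * partitionNumber r (Gedges r m) + 1 := by
    rw [Fintype.card_option, Fintype.card_prod, Fintype.card_fin, hpm]
  rw [hcardeq] at h1
  refine h1.trans ?_
  have := S9.card_Idx_le r
  exact Nat.add_le_add_right (Nat.mul_le_mul_right _ this) 1
end

section
/- Let r ≥ 4 be even and m ≥ 1. The rank over the field 𝔽₂ of the adjacency matrix AD_m^r of the r-uniform hypergraph G_m^r is at least (C(r, r/2) + 1)^m − 1. -/
section Aux13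

open Matrix Finset


abbrev Hf (r : ℕ) := {s : Finset (Fin r) // s.card = r / 2}

def cp (r : ℕ) : Option (Hf r) → Option (Hf r) → Bool
  | some s, some t => decide (t.1 = s.1ᶜ)
  | _, _ => false

def Pm (r : ℕ) : Matrix (Option (Hf r)) (Option (Hf r)) (ZMod 2) :=
  Matrix.of fun a b => if cp r a b then 0 else 1

def Rmat (r : ℕ) : Matrix (Option (Hf r)) (Option (Hf r)) (ZMod 2) :=
  Matrix.of fun a b => if a = none ∨ b = none ∨ cp r a b then 1 else 0

lemma cp_none_left (r : ℕ) (b : Option (Hf r)) : cp r none b = false := by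
  cases b <;> rfl

lemma cp_none_right (r : ℕ) (a : Option (Hf r)) : cp r a none = false := by
  cases a <;> rfl

lemma Pm_none_left (r : ℕ) (b : Option (Hf r)) : Pm r none b = 1 := by
  simp [Pm, cp_none_left]

lemma Pm_none_right (r : ℕ) (a : Option (Hf r)) : Pm r a none = 1 := by
  simp [Pm, cp_none_right]

lemma hcompl {r : ℕ} (hre : Even r) (s : Hf r) : (s.1ᶜ).card = r / 2 := by
  have h2 := s.2
  rw [Finset.card_compl, Fintype.card_fin]
  obtain ⟨k, hk⟩ := hre
  omega

lemma choose_even {r : ℕ} (hr : 4 ≤ r) (hre : Even r) : Even (r.choose (r / 2)) := by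
  obtain ⟨k, hk⟩ := hre
  subst hk
  have h1 : (k + k) / 2 = k := by omega
  rw [h1]
  obtain ⟨k', rfl⟩ : ∃ k', k = k' + 1 := ⟨k - 1, by omega⟩
  have h2 : k' + 1 + (k' + 1) = (k' + k' + 1) + 1 := by ring
  rw [h2, Nat.choose_succ_succ]
  have hsymm : (k' + k' + 1).choose (k' + 1) = (k' + k' + 1).choose k' := by
    rw [← Nat.choose_symm (show k' + 1 ≤ k' + k' + 1 by omega)]
    congr 1
    omega
  rw [hsymm]
  exact ⟨_, rfl⟩

lemma card_Hf {r : ℕ} : Fintype.card (Hf r) = r.choose (r / 2) := by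
  rw [Fintype.card_finset_len, Fintype.card_fin]

lemma card_option_Hf_cast {r : ℕ} (hr : 4 ≤ r) (hre : Even r) :
    ((Fintype.card (Option (Hf r)) : ZMod 2)) = 1 := by
  rw [Fintype.card_option, card_Hf]
  obtain ⟨k, hk⟩ := choose_even hr hre
  rw [hk]
  push_cast
  have h2 : (k : ZMod 2) + k = 0 := by
    rw [← two_mul, show (2 : ZMod 2) = 0 from rfl, zero_mul]
  rw [h2, zero_add]

lemma ite01 (P : Prop) [Decidable P] : (if P then (0:ZMod 2) else 1) = 1 + (if P then 1 else 0) := by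
  by_cases h : P <;> simp [h] <;> decide

lemma sum_card_zmod {r : ℕ} (hr : 4 ≤ r) (hre : Even r) :
    ∑ _x : Hf r, (1 : ZMod 2) = 0 := by
  rw [Finset.sum_const, Finset.card_univ, nsmul_eq_mul, mul_one, card_Hf,
    ZMod.natCast_eq_zero_iff]
  exact (choose_even hr hre).two_dvd

lemma Rmat_none_left {r : ℕ} (b : Option (Hf r)) : Rmat r none b = 1 := by simp [Rmat]

lemma Rmat_none_right {r : ℕ} (a : Option (Hf r)) : Rmat r a none = 1 := by simp [Rmat]

lemma Rmat_some_some {r : ℕ} (hre : Even r) (x t : Hf r) :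
    Rmat r (some x) (some t) = if x = (⟨t.1ᶜ, hcompl hre t⟩ : Hf r) then 1 else 0 := by
  by_cases h : x = (⟨t.1ᶜ, hcompl hre t⟩ : Hf r)
  · rw [if_pos h, Rmat, Matrix.of_apply, if_pos]
    right; right
    rw [h]
    simp [cp]
  · rw [if_neg h, Rmat, Matrix.of_apply, if_neg]
    rintro (h1 | h2 | h3)
    · exact Option.some_ne_none x h1
    · exact Option.some_ne_none t h2
    · have : t.1 = x.1ᶜ := by simpa [cp] using h3
      exact h (Subtype.ext (by rw [← compl_compl x.1, ← this]))

lemma Pm_some_some {r : ℕ} (hre : Even r) (s x : Hf r) :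
    Pm r (some s) (some x) = if x = (⟨s.1ᶜ, hcompl hre s⟩ : Hf r) then 0 else 1 := by
  rw [Pm, Matrix.of_apply]
  by_cases h : x = (⟨s.1ᶜ, hcompl hre s⟩ : Hf r)
  · rw [if_pos h, if_pos]
    subst h
    simp [cp]
  · rw [if_neg h, if_neg]
    intro h3
    have : x.1 = s.1ᶜ := by simpa [cp] using h3
    exact h (Subtype.ext this)

lemma PR {r : ℕ} (hr : 4 ≤ r) (hre : Even r) : Pm r * Rmat r = 1 := by
  ext a c
  rw [Matrix.mul_apply, Fintype.sum_option]
  cases a with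
  | none =>
    rw [Pm_none_left, Rmat_none_left, one_mul]
    cases c with
    | none =>
      have h : ∀ x : Hf r, Pm r none (some x) * Rmat r (some x) none = 1 := by
        intro x; rw [Pm_none_left, Rmat_none_right, one_mul]
      rw [Finset.sum_congr rfl fun x _ => h x, sum_card_zmod hr hre, add_zero,
        Matrix.one_apply_eq]
    | some t =>
      have h : ∀ x : Hf r, Pm r none (some x) * Rmat r (some x) (some t)
          = if x = (⟨t.1ᶜ, hcompl hre t⟩ : Hf r) then 1 else 0 := by
        intro x; rw [Pm_none_left, one_mul, Rmat_some_some hre]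
      rw [Finset.sum_congr rfl fun x _ => h x, Finset.sum_ite_eq' Finset.univ,
        if_pos (Finset.mem_univ _), Matrix.one_apply_ne (by simp)]
      decide
  | some s =>
    rw [Pm_none_right, Rmat_none_left, one_mul]
    cases c with
    | none =>
      have h : ∀ x : Hf r, Pm r (some s) (some x) * Rmat r (some x) none
          = 1 + (if x = (⟨s.1ᶜ, hcompl hre s⟩ : Hf r) then 1 else 0) := by
        intro x
        rw [Pm_some_some hre, Rmat_none_right, mul_one, ite01]
      rw [Finset.sum_congr rfl fun x _ => h x, Finset.sum_add_distrib, sum_card_zmod hr hre,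
        Finset.sum_ite_eq' Finset.univ, if_pos (Finset.mem_univ _), zero_add,
        Matrix.one_apply_ne (by simp)]
      decide
    | some t =>
      have h : ∀ x : Hf r, Pm r (some s) (some x) * Rmat r (some x) (some t)
          = (if x = (⟨t.1ᶜ, hcompl hre t⟩ : Hf r) then 1 else 0)
            + (if x = (⟨s.1ᶜ, hcompl hre s⟩ : Hf r) then
                (if x = (⟨t.1ᶜ, hcompl hre t⟩ : Hf r) then (1 : ZMod 2) else 0) else 0) := by
        intro x
        rw [Pm_some_some hre, Rmat_some_some hre, ite01, add_mul, one_mul, ite_mul, one_mul,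
          zero_mul]
      rw [Finset.sum_congr rfl fun x _ => h x, Finset.sum_add_distrib,
        Finset.sum_ite_eq' Finset.univ, Finset.sum_ite_eq' Finset.univ,
        if_pos (Finset.mem_univ _), if_pos (Finset.mem_univ _)]
      have hiff : ((⟨s.1ᶜ, hcompl hre s⟩ : Hf r) = (⟨t.1ᶜ, hcompl hre t⟩ : Hf r)) ↔ s = t := by
        constructor
        · intro h'
          have : s.1ᶜ = t.1ᶜ := congrArg Subtype.val h'
          exact Subtype.ext (compl_injective this)
        · rintro rfl; rfl
      by_cases hst : s = t
      · rw [if_pos (hiff.2 hst), hst, Matrix.one_apply_eq]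
        decide
      · rw [if_neg (fun h' => hst (hiff.1 h')), Matrix.one_apply_ne (by simpa using hst)]
        decide

def Mbig (r m : ℕ) : Matrix (Fin m → Option (Hf r)) (Fin m → Option (Hf r)) (ZMod 2) :=
  Matrix.of fun w w' => ∏ j, Pm r (w j) (w' j)

def Nbig (r m : ℕ) : Matrix (Fin m → Option (Hf r)) (Fin m → Option (Hf r)) (ZMod 2) :=
  Matrix.of fun w w' => ∏ j, Rmat r (w j) (w' j)

lemma MN {r m : ℕ} (hr : 4 ≤ r) (hre : Even r) : Mbig r m * Nbig r m = 1 := by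
  ext w w'
  rw [Matrix.mul_apply]
  have h1 : ∀ v : Fin m → Option (Hf r),
      Mbig r m w v * Nbig r m v w' = ∏ j, (Pm r (w j) (v j) * Rmat r (v j) (w' j)) := by
    intro v
    rw [Mbig, Nbig, Matrix.of_apply, Matrix.of_apply, Finset.prod_mul_distrib]
  rw [Finset.sum_congr rfl fun v _ => h1 v,
    show (Finset.univ : Finset (Fin m → Option (Hf r)))
      = Fintype.piFinset (fun _ => Finset.univ) from (Fintype.piFinset_univ).symm,
    ← Finset.prod_univ_sum (fun _ => Finset.univ) (fun j b => Pm r (w j) b * Rmat r b (w' j))]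
  have h2 : ∀ j : Fin m, ∑ b, Pm r (w j) b * Rmat r b (w' j)
      = (1 : Matrix (Option (Hf r)) (Option (Hf r)) (ZMod 2)) (w j) (w' j) := by
    intro j
    rw [← Matrix.mul_apply, PR hr hre]
  rw [Finset.prod_congr rfl fun j _ => h2 j]
  simp only [Matrix.one_apply]
  rw [Finset.prod_boole]
  by_cases h : w = w'
  · rw [if_pos h, if_pos (fun j _ => congrFun h j)]
  · rw [if_neg h, if_neg (fun hall => h (funext fun j => hall j (Finset.mem_univ j)))]

lemma rank_Mbig {r m : ℕ} (hr : 4 ≤ r) (hre : Even r) :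
    (Mbig r m).rank = (r.choose (r / 2) + 1) ^ m := by
  have hinv := invertibleOfRightInverse _ _ (MN (r := r) (m := m) hr hre)
  rw [Matrix.rank_of_isUnit _ (isUnit_of_invertible _), Fintype.card_fun, Fintype.card_option,
    card_Hf, Fintype.card_fin]

lemma rank_add_le' {n : Type*} [Fintype n] (A B : Matrix n n (ZMod 2)) :
    (A + B).rank ≤ A.rank + B.rank := by
  rw [Matrix.rank, Matrix.rank, Matrix.rank, Matrix.mulVecLin_add]
  refine le_trans (Submodule.finrank_mono ?_)
    (Submodule.finrank_add_le_finrank_add_finrank _ _)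
  rintro x ⟨y, rfl⟩
  exact Submodule.mem_sup.2 ⟨_, ⟨y, rfl⟩, _, ⟨y, rfl⟩, rfl⟩

lemma rank_J_le {n : Type*} [Fintype n] :
    (Matrix.of fun _ _ : n => (1 : ZMod 2)).rank ≤ 1 := by
  have h : (Matrix.of fun _ _ : n => (1 : ZMod 2)) =
      (Matrix.of fun (_ : n) (_ : Unit) => (1 : ZMod 2)) *
        (Matrix.of fun (_ : Unit) (_ : n) => (1 : ZMod 2)) := by
    ext i j
    simp [Matrix.mul_apply]
  rw [h]
  exact le_trans (Matrix.rank_mul_le_left _ _)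
    (le_trans (Matrix.rank_le_card_width _) (by simp))

lemma rank_submatrix_le'' {α β γ δ : Type*} [Fintype α] [Fintype β] [Fintype γ] [Fintype δ]
    [DecidableEq α] [DecidableEq β] (A : Matrix α β (ZMod 2)) (f : γ → α) (g : δ → β) :
    (A.submatrix f g).rank ≤ A.rank := by
  have h : A.submatrix f g = (Matrix.of fun u i => if f u = i then (1 : ZMod 2) else 0) * A *
      (Matrix.of fun j u' => if j = g u' then (1 : ZMod 2) else 0) := by
    ext u u'
    simp [Matrix.mul_apply, Finset.sum_mul, ite_mul, one_mul, zero_mul, mul_ite, mul_one,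
      mul_zero, Finset.sum_ite_eq, Finset.sum_ite_eq']
  rw [h, Matrix.mul_assoc]
  exact le_trans (Matrix.rank_mul_le_right _ _) (Matrix.rank_mul_le_left _ _)

def elt {r : ℕ} (s : Hf r) (i : Fin (r / 2)) : Fin r := (s.1.orderIsoOfFin s.2 i : Fin r)

lemma elt_mem {r : ℕ} (s : Hf r) (i : Fin (r / 2)) : elt s i ∈ s.1 := (s.1.orderIsoOfFin s.2 i).2

lemma elt_inj {r : ℕ} (s : Hf r) : Function.Injective (elt s) := fun i i' h =>
  (s.1.orderIsoOfFin s.2).injective (Subtype.ext h)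

lemma elt_surj {r : ℕ} (s : Hf r) {c : Fin r} (hc : c ∈ s.1) : ∃ i, elt s i = c :=
  ⟨(s.1.orderIsoOfFin s.2).symm ⟨c, hc⟩, by simp [elt]⟩

def vert {r m : ℕ} (w : Fin m → Option (Hf r)) (i : Fin (r / 2)) : Fin m → Option (Fin r) :=
  fun j => (w j).map fun s => elt s i

def ew {r m : ℕ} (w : Fin m → Option (Hf r)) : Finset (Fin m → Option (Fin r)) :=
  Finset.image (vert w) Finset.univ

def Nz {r m : ℕ} (w : Fin m → Option (Hf r)) : Prop := ∃ j s, w j = some s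

lemma mem_ew {r m : ℕ} {w : Fin m → Option (Hf r)} {u : Fin m → Option (Fin r)} :
    u ∈ ew w ↔ ∃ i, u = vert w i := by
  simp [ew, eq_comm]

lemma vert_inj {r m : ℕ} {w : Fin m → Option (Hf r)} (hw : Nz w) :
    Function.Injective (vert w) := by
  obtain ⟨j, s, hj⟩ := hw
  intro i i' h
  have h2 := congrFun h j
  simp only [vert, hj, Option.map_some] at h2
  exact elt_inj s (Option.some.inj h2)

lemma card_ew {r m : ℕ} {w : Fin m → Option (Hf r)} (hw : Nz w) : (ew w).card = r / 2 := by
  rw [ew, Finset.card_image_of_injective _ (vert_inj hw), Finset.card_univ, Fintype.card_fin]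

lemma edge_iff {r m : ℕ} (hr : 4 ≤ r) (hre : Even r) {w w' : Fin m → Option (Hf r)}
    (hw : Nz w) (hw' : Nz w') :
    (ew w ∪ ew w') ∈ Gedges r m ↔ ∃ j, cp r (w j) (w' j) := by
  constructor
  · rintro ⟨-, j, hj⟩
    refine ⟨j, ?_⟩
    have claim : ∀ c : Fin r,
        (∃ s, w j = some s ∧ c ∈ s.1) ∨ (∃ s, w' j = some s ∧ c ∈ s.1) := by
      intro c
      obtain ⟨u, hu, huj⟩ := hj c
      rcases Finset.mem_union.1 hu with hu | hu
      · obtain ⟨i, rfl⟩ := mem_ew.1 hu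
        left
        have huj' : (w j).map (fun s => elt s i) = some c := huj
        cases hwj : w j with
        | none => rw [hwj] at huj'; simp at huj'
        | some s =>
          rw [hwj] at huj'
          simp only [Option.map_some, Option.some.injEq] at huj'
          exact ⟨s, rfl, huj' ▸ elt_mem s i⟩
      · obtain ⟨i, rfl⟩ := mem_ew.1 hu
        right
        have huj' : (w' j).map (fun s => elt s i) = some c := huj
        cases hwj : w' j with
        | none => rw [hwj] at huj'; simp at huj'
        | some s =>
          rw [hwj] at huj'
          simp only [Option.map_some, Option.some.injEq] at huj'
          exact ⟨s, rfl, huj' ▸ elt_mem s i⟩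
    have hfull : ∀ s' : Hf r, (∀ c : Fin r, c ∈ s'.1) → False := by
      intro s' hall
      have huniv : s'.1 = Finset.univ := Finset.eq_univ_iff_forall.2 hall
      have h2 := s'.2
      rw [huniv, Finset.card_univ, Fintype.card_fin] at h2
      omega
    cases hwj : w j with
    | none =>
      exfalso
      cases hw'j : w' j with
      | none =>
        rcases claim ⟨0, by omega⟩ with ⟨s, hs, -⟩ | ⟨s, hs, -⟩
        · rw [hwj] at hs; exact absurd hs (by simp)
        · rw [hw'j] at hs; exact absurd hs (by simp)
      | some s' =>
        refine hfull s' fun c => ?_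
        rcases claim c with ⟨t, ht, hct⟩ | ⟨t, ht, hct⟩
        · rw [hwj] at ht; exact absurd ht (by simp)
        · rw [hw'j] at ht; cases Option.some.inj ht; exact hct
    | some s =>
      cases hw'j : w' j with
      | none =>
        exfalso
        refine hfull s fun c => ?_
        rcases claim c with ⟨t, ht, hct⟩ | ⟨t, ht, hct⟩
        · rw [hwj] at ht; cases Option.some.inj ht; exact hct
        · rw [hw'j] at ht; exact absurd ht (by simp)
      | some s' =>
        have hsub : s.1ᶜ ⊆ s'.1 := by
          intro c hc
          rcases claim c with ⟨t, ht, hct⟩ | ⟨t, ht, hct⟩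
          · rw [hwj] at ht; cases Option.some.inj ht
            exact absurd hct (Finset.mem_compl.1 hc)
          · rw [hw'j] at ht; cases Option.some.inj ht; exact hct
        have heq : s.1ᶜ = s'.1 :=
          Finset.eq_of_subset_of_card_le hsub (by rw [hcompl hre s, s'.2])
        simp [cp, heq.symm]
  · rintro ⟨j, hcp⟩
    cases hwj : w j with
    | none => rw [hwj, cp_none_left] at hcp; exact absurd hcp (by simp)
    | some s =>
      cases hw'j : w' j with
      | none => rw [hwj, hw'j, cp_none_right] at hcp; exact absurd hcp (by simp)
      | some s' =>
        rw [hwj, hw'j] at hcp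
        have hcc : s'.1 = s.1ᶜ := by simpa [cp] using hcp
        have hdisj : Disjoint (ew w) (ew w') := by
          rw [Finset.disjoint_left]
          rintro u hu hu'
          obtain ⟨i, rfl⟩ := mem_ew.1 hu
          obtain ⟨i', hvi⟩ := mem_ew.1 hu'
          have h2 := congrFun hvi j
          simp only [vert, hwj, hw'j, Option.map_some, Option.some.injEq] at h2
          have hmem' := elt_mem s' i'
          rw [hcc, ← h2] at hmem'
          exact Finset.mem_compl.1 hmem' (elt_mem s i)
        refine ⟨?_, j, ?_⟩
        · rw [Finset.card_union_of_disjoint hdisj, card_ew hw, card_ew hw']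
          obtain ⟨k, hk⟩ := hre
          omega
        · intro c
          by_cases hc : c ∈ s.1
          · obtain ⟨i, hi⟩ := elt_surj s hc
            exact ⟨vert w i, Finset.mem_union_left _ (mem_ew.2 ⟨i, rfl⟩),
              by simp only [vert, hwj, Option.map_some, hi]⟩
          · have hc' : c ∈ s'.1 := by rw [hcc]; exact Finset.mem_compl.2 hc
            obtain ⟨i, hi⟩ := elt_surj s' hc'
            exact ⟨vert w' i, Finset.mem_union_right _ (mem_ew.2 ⟨i, rfl⟩),
              by simp only [vert, hw'j, Option.map_some, hi]⟩


end Aux13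

open scoped Classical in
/-- For even `r ≥ 4` and `m ≥ 1`, the rank over `𝔽₂` of the adjacency
matrix `AD_m^r` of `G_m^r` (rows and columns indexed by `(r/2)`-element subsets of the
vertex set `{0,…,r−1,*}^m`, with entry 1 at `(e₁, e₂)` exactly when `e₁ ∪ e₂` is an
edge of `G_m^r`) is at least `(C(r, r/2) + 1)^m − 1`. -/
theorem statement13 (r m : ℕ) (hr : 4 ≤ r) (hre : Even r) (hm : 1 ≤ m) :
    (r.choose (r / 2) + 1) ^ m - 1 ≤
      Matrix.rank
        (Matrix.of fun e₁ e₂ : {s : Finset (Fin m → Option (Fin r)) // s.card = r / 2} =>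
          if e₁.1 ∪ e₂.1 ∈ Gedges r m then (1 : ZMod 2) else 0) := by
  classical
  set A : Matrix {s : Finset (Fin m → Option (Fin r)) // s.card = r / 2}
      {s : Finset (Fin m → Option (Fin r)) // s.card = r / 2} (ZMod 2) :=
    Matrix.of fun e₁ e₂ => if e₁.1 ∪ e₂.1 ∈ Gedges r m then (1 : ZMod 2) else 0 with hA
  let φ : {w : Fin m → Option (Hf r) // Nz w} →
      {s : Finset (Fin m → Option (Fin r)) // s.card = r / 2} :=
    fun u => ⟨ew u.1, card_ew u.2⟩
  set B := A.submatrix φ φ with hB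
  have hBA : B.rank ≤ A.rank := rank_submatrix_le'' A φ φ
  set X : Matrix (Fin m → Option (Hf r)) (Fin m → Option (Hf r)) (ZMod 2) :=
    Matrix.of fun w w' => 1 + Mbig r m w w' with hX
  have hMM : ∀ w w' : Fin m → Option (Hf r),
      Mbig r m w w' = if ∀ j, ¬ cp r (w j) (w' j) then 1 else 0 := by
    intro w w'
    rw [Mbig, Matrix.of_apply]
    have h : ∀ j : Fin m, Pm r (w j) (w' j) = if ¬ cp r (w j) (w' j) then (1 : ZMod 2) else 0 := by
      intro j
      rw [Pm, Matrix.of_apply]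
      by_cases h : cp r (w j) (w' j) <;> simp [h]
    rw [Finset.prod_congr rfl fun j _ => h j, Finset.prod_boole]
    by_cases h : ∀ j, ¬ cp r (w j) (w' j)
    · rw [if_pos h, if_pos fun j _ => h j]
    · rw [if_neg h, if_neg fun hall => h fun j => hall j (Finset.mem_univ j)]
  have hXzero : ∀ w w' : Fin m → Option (Hf r), (¬ Nz w ∨ ¬ Nz w') → X w w' = 0 := by
    rintro w w' (hz | hz)
    · have hnone : ∀ j, w j = none := by
        intro j
        cases h : w j with
        | none => rfl
        | some s => exact absurd ⟨j, s, h⟩ hz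
      rw [hX, Matrix.of_apply, hMM, if_pos fun j => by rw [hnone j, cp_none_left]; simp]
      decide
    · have hnone : ∀ j, w' j = none := by
        intro j
        cases h : w' j with
        | none => rfl
        | some s => exact absurd ⟨j, s, h⟩ hz
      rw [hX, Matrix.of_apply, hMM, if_pos fun j => by rw [hnone j, cp_none_right]; simp]
      decide
  have hfact : X = (Matrix.of fun (w : Fin m → Option (Hf r)) (u : {w // Nz w}) =>
        if w = u.1 then (1 : ZMod 2) else 0) * B *
      (Matrix.of fun (u : {w // Nz w}) (w : Fin m → Option (Hf r)) =>
        if u.1 = w then (1 : ZMod 2) else 0) := by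
    ext w w'
    rw [Matrix.mul_assoc, Matrix.mul_apply]
    by_cases hw : Nz w
    · have hcol : ∀ u : {w // Nz w},
          (Matrix.of fun (w : Fin m → Option (Hf r)) (u : {w // Nz w}) =>
            if w = u.1 then (1 : ZMod 2) else 0) w u = if u = ⟨w, hw⟩ then 1 else 0 := by
        intro u
        rw [Matrix.of_apply]
        refine if_congr ⟨fun h => Subtype.ext h.symm, fun h => by rw [h]⟩ rfl rfl
      rw [Finset.sum_congr rfl fun u _ => by rw [hcol u, ite_mul, one_mul, zero_mul],
        Finset.sum_ite_eq' Finset.univ, if_pos (Finset.mem_univ _), Matrix.mul_apply]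
      by_cases hw' : Nz w'
      · have hcol' : ∀ u' : {w // Nz w},
            (Matrix.of fun (u : {w // Nz w}) (w : Fin m → Option (Hf r)) =>
              if u.1 = w then (1 : ZMod 2) else 0) u' w' = if u' = ⟨w', hw'⟩ then 1 else 0 := by
          intro u'
          rw [Matrix.of_apply]
          refine if_congr ⟨fun h => Subtype.ext h, fun h => by rw [h]⟩ rfl rfl
        rw [Finset.sum_congr rfl fun u' _ => by rw [hcol' u', mul_ite, mul_one, mul_zero],
          Finset.sum_ite_eq' Finset.univ, if_pos (Finset.mem_univ _)]
        show X w w' = if (ew w ∪ ew w') ∈ Gedges r m then (1 : ZMod 2) else 0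
        rw [hX, Matrix.of_apply, hMM]
        by_cases hedge : ∃ j, cp r (w j) (w' j)
        · rw [if_pos ((edge_iff hr hre hw hw').2 hedge),
            if_neg (by push_neg; simpa using hedge)]
          decide
        · rw [if_neg fun hmem => hedge ((edge_iff hr hre hw hw').1 hmem),
            if_pos (by push_neg at hedge; simpa using hedge)]
          decide
      · have hz : ∀ u' : {w // Nz w},
            (Matrix.of fun (u : {w // Nz w}) (w : Fin m → Option (Hf r)) =>
              if u.1 = w then (1 : ZMod 2) else 0) u' w' = 0 := by
          intro u'
          rw [Matrix.of_apply, if_neg (fun h => hw' (by rw [← h]; exact u'.2))]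
        rw [Finset.sum_congr rfl fun u' _ => by rw [hz u', mul_zero], Finset.sum_const_zero]
        exact hXzero w w' (Or.inr hw')
    · have hz : ∀ u : {w // Nz w},
          (Matrix.of fun (w : Fin m → Option (Hf r)) (u : {w // Nz w}) =>
            if w = u.1 then (1 : ZMod 2) else 0) w u = 0 := by
        intro u
        rw [Matrix.of_apply, if_neg (fun h => hw (by rw [h]; exact u.2))]
      rw [Finset.sum_congr rfl fun u _ => by rw [hz u, zero_mul], Finset.sum_const_zero]
      exact hXzero w w' (Or.inl hw)
  have hXB : X.rank ≤ B.rank := by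
    rw [hfact, Matrix.mul_assoc]
    exact le_trans (Matrix.rank_mul_le_right _ _) (Matrix.rank_mul_le_left _ _)
  have hMX : Mbig r m = X + Matrix.of fun _ _ : Fin m → Option (Hf r) => (1 : ZMod 2) := by
    ext w w'
    show Mbig r m w w' = (1 + Mbig r m w w') + 1
    have : (1 : ZMod 2) + 1 = 0 := by decide
    ring_nf
    rw [show (2 : ZMod 2) = 0 by decide]
    ring
  have hrankM : (Mbig r m).rank ≤ X.rank + 1 := by
    rw [hMX]
    exact le_trans (rank_add_le' _ _) (Nat.add_le_add_left rank_J_le _)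
  have hcard := rank_Mbig (r := r) (m := m) hr hre
  omega
end
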